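/- arXiv:2403.18611 — 10 statements merged into one kernel-verified Lean document; each statement's English description precedes it below -/
import Mathlib

section
/- Let q be a prime power and 2 ≤ t ≤ q - 1. Let V = F_q × F_{q^2} × ⋯ × F_{q^t} and define P(v) = v_1 + N_2(v_2) + ⋯ + N_t(v_t), where N_i is the norm from F_{q^i} to F_q. Then for every u ∈ F_q and every affine line ℓ = {ax + b : x ∈ F_q} in V with a ≠ 0, the set S_u = {v ∈ V : P(v) = u} satisfies |ℓ ∩ S_u| ≤ t. -/
open Polynomial Module Matrix

private lemma my_eval_charpoly {n : Type} [Fintype n] [DecidableEq n] {K : Type} [Field K]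
    (M : Matrix n n K) (x : K) :
    M.charpoly.eval x = (x • (1 : Matrix n n K) - M).det := by
  rw [Matrix.charpoly, eval_det, matPolyEquiv_charmatrix, eval_sub, eval_X, eval_C,
    smul_one_eq_diagonal, scalar_apply]

private lemma norm_affine_poly (K V : Type) [Field K] [Field V] [Algebra K V]
    [FiniteDimensional K V] (a b : V) :
    ∃ p : K[X], p.natDegree ≤ finrank K V ∧ p.coeff (finrank K V) = Algebra.norm K a ∧
      (∀ x : K, p.eval x = Algebra.norm K (x • a + b)) ∧ (a = 0 → p.natDegree = 0) := by
  classical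
  by_cases hA : a = 0
  · subst hA
    refine ⟨C (Algebra.norm K b), (natDegree_C _).le.trans (Nat.zero_le _), ?_,
      fun x => by simp, fun _ => natDegree_C _⟩
    rw [coeff_C, if_neg (Module.finrank_pos (R := K) (M := V)).ne', Algebra.norm_zero]
  · set n := finrank K V with hn
    let Bs : Basis (Fin n) K V := Module.finBasis K V
    set A := Algebra.leftMulMatrix Bs a with hAdef
    set Bm := Algebra.leftMulMatrix Bs b with hBdef
    have hdetA : A.det = Algebra.norm K a := (Algebra.norm_eq_matrix_det Bs a).symm
    have hnA : Algebra.norm K a ≠ 0 := by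
      have hu : IsUnit a := IsUnit.mk0 a hA
      exact (hu.map (Algebra.norm K)).ne_zero
    have hdet : IsUnit A.det := by rw [hdetA]; exact IsUnit.mk0 _ hnA
    have hcdim : (-(A⁻¹ * Bm)).charpoly.natDegree = n := by
      rw [Matrix.charpoly_natDegree_eq_dim, Fintype.card_fin]
    refine ⟨C (Algebra.norm K a) * (-(A⁻¹ * Bm)).charpoly, ?_, ?_, ?_, fun h => absurd h hA⟩
    · exact (natDegree_C_mul_le _ _).trans hcdim.le
    · have hmon := (Matrix.charpoly_monic (-(A⁻¹ * Bm))).coeff_natDegree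
      rw [hcdim] at hmon
      rw [coeff_C_mul, hmon, mul_one]
    · intro x
      have hlm : Algebra.leftMulMatrix Bs (x • a + b) = x • A + Bm := by
        rw [map_add, _root_.map_smul]
      rw [eval_mul, eval_C, my_eval_charpoly, sub_neg_eq_add,
        Algebra.norm_eq_matrix_det Bs (x • a + b), hlm]
      have key : x • (1 : Matrix (Fin n) (Fin n) K) + A⁻¹ * Bm = A⁻¹ * (x • A + Bm) := by
        rw [Matrix.mul_add, Matrix.mul_smul, Matrix.nonsing_inv_mul A hdet]
      rw [key, Matrix.det_mul, ← hdetA, ← mul_assoc]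
      have : A.det * A⁻¹.det = 1 := by
        rw [mul_comm]; exact Matrix.det_nonsing_inv_mul_det A hdet
      rw [this, one_mul]

/-- Let `q` be a prime power, `2 ≤ t ≤ q-1`,
`V = F_q × F_{q²} × ⋯ × F_{q^t}` and `P(v) = v₁ + N₂(v₂) + ⋯ + N_t(v_t)`
(where `N_i` is the field norm from `F_{q^i}` to `F_q`; the first coordinate is
the norm of the degree-1 extension). Then for every `u ∈ F_q` and every affine
line `ℓ = {x•a + b : x ∈ F_q}` with `a ≠ 0`, the fiber
`S_u = {v : P(v) = u}` satisfies `|ℓ ∩ S_u| ≤ t`. -/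
theorem stmt2 (q t : ℕ) (hq : IsPrimePow q) (ht : 2 ≤ t) (htq : t ≤ q - 1)
    (K : Type) [Field K] [Fintype K] (hK : Fintype.card K = q)
    (L : Fin t → Type) [∀ i, Field (L i)] [∀ i, Fintype (L i)] [∀ i, Algebra K (L i)]
    (hL : ∀ i : Fin t, Fintype.card (L i) = q ^ ((i : ℕ) + 1))
    (u : K) (a b : ∀ i, L i) (ha : a ≠ 0) :
    Set.ncard {v : ∀ i, L i |
        (∃ x : K, v = x • a + b) ∧ (∑ i, Algebra.norm K (v i)) = u} ≤ t := by
  classical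
  haveI : ∀ i, FiniteDimensional K (L i) := fun i => Module.Finite.of_finite
  have hq2 : 2 ≤ q := hq.two_le
  -- finrank computation
  have hfr : ∀ i : Fin t, finrank K (L i) = (i : ℕ) + 1 := by
    intro i
    have h1 : Fintype.card (L i) = q ^ finrank K (L i) := by
      rw [card_eq_pow_finrank (K := K) (V := L i), hK]
    have h2 : q ^ finrank K (L i) = q ^ ((i : ℕ) + 1) := by rw [← h1, hL i]
    exact Nat.pow_right_injective hq2 h2
  -- get polynomials
  choose p hdeg hcoeff heval hconst using fun i =>
    norm_affine_poly K (L i) (a i) (b i)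
  -- the global polynomial
  set P : K[X] := (∑ i, p i) - C u with hPdef
  obtain ⟨j, hj⟩ : ∃ j, a j ≠ 0 := Function.ne_iff.mp ha
  set s : Finset (Fin t) := Finset.univ.filter (fun i => a i ≠ 0) with hs
  have hsne : s.Nonempty := ⟨j, by simp [hs, hj]⟩
  set d : Fin t := s.max' hsne with hd
  have hds : a d ≠ 0 := by
    have := s.max'_mem hsne
    simpa [hs] using this
  have hPne : P ≠ 0 := by
    intro h
    have hc : P.coeff ((d : ℕ) + 1) = 0 := by rw [h, coeff_zero]
    rw [hPdef, coeff_sub, finset_sum_coeff, coeff_C, if_neg (Nat.succ_ne_zero _), sub_zero] at hc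
    rw [Finset.sum_eq_single d] at hc
    · rw [← hfr d] at hc
      exact (IsUnit.map (Algebra.norm K) (IsUnit.mk0 _ hds)).ne_zero (hcoeff d ▸ hc)
    · intro i _ hne
      by_cases hai : a i = 0
      · exact coeff_eq_zero_of_natDegree_lt (by rw [hconst i hai]; exact Nat.succ_pos _)
      · have hid : i ≤ d := Finset.le_max' s i (by simp [hs, hai])
        have hlt : (i : ℕ) < (d : ℕ) := Fin.lt_def.mp (lt_of_le_of_ne hid hne)
        exact coeff_eq_zero_of_natDegree_lt
          (lt_of_le_of_lt ((hdeg i).trans_eq (hfr i)) (Nat.succ_lt_succ hlt))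
    · intro h; exact absurd (Finset.mem_univ d) h
  have hPdeg : P.natDegree ≤ t := by
    refine (natDegree_sub_le _ _).trans (max_le ?_ ?_)
    · exact natDegree_sum_le_of_forall_le _ _ fun i _ =>
        ((hdeg i).trans_eq (hfr i)).trans i.isLt
    · exact (natDegree_C _).le.trans (Nat.zero_le _)
  -- injectivity of the line parametrization
  have hinj : Function.Injective (fun x : K => x • a + b) := by
    intro x y hxy
    have h1 : x • a = y • a := by
      have := add_right_cancel hxy
      exact this
    have h2 : x • a j = y • a j := congrFun h1 j
    rw [Algebra.smul_def, Algebra.smul_def] at h2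
    have h3 : algebraMap K (L j) x = algebraMap K (L j) y := mul_right_cancel₀ hj h2
    exact (algebraMap K (L j)).injective h3
  -- the fiber is the image of the root set
  have hset : {v : ∀ i, L i |
        (∃ x : K, v = x • a + b) ∧ (∑ i, Algebra.norm K (v i)) = u}
      = (fun x : K => x • a + b) '' {x : K | P.eval x = 0} := by
    have hkey : ∀ x : K, (∑ i, Algebra.norm K ((x • a + b) i)) = (∑ i, p i).eval x := by
      intro x
      rw [eval_finset_sum]
      refine Finset.sum_congr rfl fun i _ => ?_
      rw [heval i x]
      simp
    ext v
    simp only [Set.mem_setOf_eq, Set.mem_image]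
    constructor
    · rintro ⟨⟨x, rfl⟩, hsum⟩
      refine ⟨x, ?_, rfl⟩
      rw [hPdef]
      simp only [Set.mem_setOf_eq, eval_sub, eval_C]
      rw [← hkey x, hsum, sub_self]
    · rintro ⟨x, hx, rfl⟩
      refine ⟨⟨x, rfl⟩, ?_⟩
      simp only [Set.mem_setOf_eq, hPdef, eval_sub, eval_C, sub_eq_zero] at hx
      rw [hkey x, hx]
  rw [hset, Set.ncard_image_of_injective _ hinj]
  have hroots : {x : K | P.eval x = 0} = ↑P.roots.toFinset := by
    ext x
    simp [Polynomial.mem_roots, hPne, Polynomial.IsRoot]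
  rw [hroots, Set.ncard_coe_finset]
  calc P.roots.toFinset.card ≤ Multiset.card P.roots := P.roots.toFinset_card_le
    _ ≤ P.natDegree := P.card_roots'
    _ ≤ t := hPdeg
end

section
/- Let q be a prime power and 2 ≤ t ≤ q - 1. For every n ≥ t(t+1)/2, there exists a subset S of F_q^n such that every affine line of F_q^n meets S in at most t points, and |S| ≥ q^{n(1 - 2/(t² + t)) - 1}. -/
open Polynomial Finset

private lemma stmt5_dvd (Ω : Type) [Field Ω] (q B A : ℕ) (hq : 2 ≤ q) (hBA : B ∣ A) :
    (X ^ q ^ B - X : Polynomial Ω) ∣ X ^ q ^ A - X := by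
  have h1 : ∀ s : ℕ, (X ^ q ^ s - X : Polynomial Ω) = X * (X ^ (q ^ s - 1) - 1) := by
    intro s
    have h2 : 1 ≤ q ^ s := Nat.one_le_pow _ _ (by omega)
    rw [mul_sub, mul_one, ← pow_succ', Nat.sub_add_cancel h2]
  rw [h1, h1]
  refine mul_dvd_mul_left _ ?_
  have hdvd : q ^ B - 1 ∣ q ^ A - 1 := by
    obtain ⟨c, rfl⟩ := hBA
    have := Nat.sub_dvd_pow_sub_pow (q ^ B) 1 c
    simpa [← pow_mul] using this
  obtain ⟨c, hc⟩ := hdvd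
  rw [hc, pow_mul]
  simpa using sub_dvd_pow_sub_pow (X ^ (q ^ B - 1) : Polynomial Ω) 1 c

private lemma stmt5_sep (Ω : Type) [Field Ω] (q s : ℕ) (hs : 1 ≤ s) (hq0 : (q : Ω) = 0) :
    Separable (X ^ q ^ s - X : Polynomial Ω) := by
  unfold Separable
  have hd : derivative (X ^ q ^ s - X : Polynomial Ω) = -1 := by
    rw [derivative_sub, derivative_X_pow, derivative_X]
    have : ((q ^ s : ℕ) : Ω) = 0 := by
      push_cast [hq0]
      exact zero_pow (by omega)
    rw [this]
    simp
  rw [hd]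
  exact (isCoprime_one_right).neg_right

private lemma stmt5_deg (Ω : Type) [Field Ω] (q s : ℕ) (hq : 2 ≤ q) (hs : 1 ≤ s) :
    (X ^ q ^ s - X : Polynomial Ω).natDegree = q ^ s := by
  have h2 : 1 < q ^ s := Nat.one_lt_pow (by omega) (by omega)
  rw [natDegree_sub_eq_left_of_natDegree_lt, natDegree_X_pow]
  rw [natDegree_X, natDegree_X_pow]
  exact h2

private lemma stmt5_count (Ω : Type) [Field Ω] [DecidableEq Ω] (q s R : ℕ) (hq : 2 ≤ q) (hs : 1 ≤ s)
    (hR : 1 ≤ R) (hsR : s ∣ R) (hq0 : (q : Ω) = 0)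
    (hcard : Multiset.card (X ^ q ^ R - X : Polynomial Ω).roots = q ^ R) :
    q ^ s ≤ (X ^ q ^ s - X : Polynomial Ω).roots.toFinset.card := by
  obtain ⟨h, hh⟩ := stmt5_dvd Ω q s R hq hsR
  have hfne : (X ^ q ^ R - X : Polynomial Ω) ≠ 0 := by
    intro h0
    rw [h0] at hcard
    simp only [roots_zero, Multiset.card_zero] at hcard
    have : 1 ≤ q ^ R := Nat.one_le_pow _ _ (by omega)
    omega
  have hgne : (X ^ q ^ s - X : Polynomial Ω) ≠ 0 := by
    intro h0
    exact hfne (by rw [hh, h0, zero_mul])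
  have hhne : h ≠ 0 := by
    intro h0
    exact hfne (by rw [hh, h0, mul_zero])
  have hroots : (X ^ q ^ R - X : Polynomial Ω).roots
      = (X ^ q ^ s - X : Polynomial Ω).roots + h.roots := by
    rw [hh]
    exact roots_mul (hh ▸ hfne)
  have hdegh : h.natDegree = q ^ R - q ^ s := by
    have h1 : (X ^ q ^ R - X : Polynomial Ω).natDegree
        = (X ^ q ^ s - X : Polynomial Ω).natDegree + h.natDegree := by
      rw [hh]; exact natDegree_mul hgne hhne
    rw [stmt5_deg Ω q R hq hR, stmt5_deg Ω q s hq hs] at h1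
    omega
  have hhle : Multiset.card h.roots ≤ q ^ R - q ^ s := hdegh ▸ card_roots' h
  have hpow : q ^ s ≤ q ^ R := Nat.pow_le_pow_right (by omega) (Nat.le_of_dvd (by omega) hsR)
  have hglow : q ^ s ≤ Multiset.card (X ^ q ^ s - X : Polynomial Ω).roots := by
    rw [hroots, Multiset.card_add] at hcard
    omega
  rwa [Multiset.toFinset_card_of_nodup (Polynomial.nodup_roots (stmt5_sep Ω q s hs hq0))]

set_option maxHeartbeats 1000000 in
/-- Let `q` be a prime power and `2 ≤ t ≤ q-1`. For every
`n ≥ t(t+1)/2` there is a `t`-line evasive subset `S ⊆ F_q^n` (every affine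
line meets `S` in at most `t` points) with `|S| ≥ q^{n(1 - 2/(t²+t)) - 1}`. -/
theorem stmt5 (q t n : ℕ) (hq : IsPrimePow q) (ht : 2 ≤ t) (htq : t ≤ q - 1)
    (hn : t * (t + 1) / 2 ≤ n)
    (K : Type) [Field K] [Fintype K] (hK : Fintype.card K = q) :
    ∃ S : Set (Fin n → K),
      (∀ a b : Fin n → K, a ≠ 0 →
        Set.ncard {v ∈ S | ∃ x : K, v = x • a + b} ≤ t) ∧
      (q : ℝ) ^ ((n : ℝ) * (1 - 2 / ((t : ℝ) ^ 2 + t)) - 1) ≤ (S.ncard : ℝ) := by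
  classical
  have hq2 : 2 ≤ q := hq.two_le
  obtain ⟨p, e, hp0, he, hpe⟩ := hq
  have hp : p.Prime := hp0.nat_prime
  obtain ⟨m, hm_def⟩ : ∃ m' : ℕ, m' = t * (t + 1) / 2 := ⟨_, rfl⟩
  have hnm : m ≤ n := hm_def ▸ hn
  have hm2 : m * 2 = t * (t + 1) := by
    rw [hm_def]
    exact Nat.div_mul_cancel (Nat.even_mul_succ_self t).two_dvd
  have hm3 : 3 ≤ m := by nlinarith
  obtain ⟨k, hk_def⟩ : ∃ k' : ℕ, k' = n / m + 1 := ⟨_, rfl⟩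
  have hk1 : 1 ≤ k := by rw [hk_def]; exact Nat.succ_le_succ (Nat.zero_le _)
  have hkm : n < k * m := by
    rw [hk_def, add_mul, one_mul, Nat.mul_comm (n / m) m]
    have h2 : n % m < m := Nat.mod_lt n (by omega)
    calc n = m * (n / m) + n % m := (Nat.div_add_mod n m).symm
      _ < m * (n / m) + m := Nat.add_lt_add_left h2 _
  have hkn : k ≤ n := by
    rw [hk_def]
    exact Nat.succ_le_of_lt (Nat.div_lt_self (by omega) (by omega))
  obtain ⟨R, hR_def⟩ : ∃ R' : ℕ, R' = k * Nat.factorial t := ⟨_, rfl⟩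
  have hR1 : 1 ≤ R := by
    rw [hR_def]
    exact Nat.mul_pos hk1 (Nat.factorial_pos t)
  -- characteristic
  have hqK : ((q : ℕ) : K) = 0 := by rw [← hK]; exact FiniteField.cast_card_eq_zero K
  have hrc : ringChar K = p := by
    have h1 : (ringChar K).Prime := CharP.char_is_prime K (ringChar K)
    have h2 : ringChar K ∣ q := ringChar.dvd hqK
    rw [← hpe] at h2
    exact (Nat.prime_dvd_prime_iff_eq h1 hp).mp (h1.dvd_of_dvd_pow h2)
  haveI hKp : CharP K p := by rw [← hrc]; exact ringChar.charP K
  haveI : Fact p.Prime := ⟨hp⟩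
  -- splitting field
  set f₀ : Polynomial K := X ^ q ^ R - X with hf₀
  set Ω := f₀.SplittingField with hΩ
  haveI : Fintype Ω := Fintype.ofFinite Ω
  haveI : CharP Ω p := charP_of_injective_algebraMap (algebraMap K Ω).injective p
  set ι : K →+* Ω := algebraMap K Ω with hι
  have hι_inj : Function.Injective ι := ι.injective
  have hxq : ∀ (x : K) (s : ℕ), x ^ q ^ s = x := by
    intro x s
    rw [← hK]
    exact FiniteField.pow_card_pow s x
  have hfrob : ∀ (x : K) (s : ℕ), (ι x) ^ q ^ s = ι x := by
    intro x s
    rw [← map_pow, hxq]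
  have hqΩ : ((q : ℕ) : Ω) = 0 := by rw [← map_natCast ι, hqK, map_zero]
  have hfrobhom : ∀ (s : ℕ) (x y : Ω), (x + y) ^ q ^ s = x ^ q ^ s + y ^ q ^ s := by
    intro s x y
    have hqp : q ^ s = p ^ (e * s) := by rw [← hpe, ← pow_mul]
    rw [hqp]
    exact add_pow_char_pow x y p (e * s)
  have hsplits : Splits (f₀.map ι) := SplittingField.splits f₀
  have hmap : f₀.map ι = X ^ q ^ R - X := by
    have h0 : (X ^ q ^ R - X : Polynomial K).map ι = X ^ q ^ R - X := by
      simp [Polynomial.map_sub, Polynomial.map_pow, Polynomial.map_X]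
    exact h0
  have hcardR : Multiset.card (X ^ q ^ R - X : Polynomial Ω).roots = q ^ R := by
    have h1 : f₀.natDegree = _ := (natDegree_map ι).symm.trans hsplits.natDegree_eq_card_roots
    rw [hmap] at h1
    rw [← h1]
    exact stmt5_deg K q R hq2 hR1
  -- the submodules
  set Msub : ℕ → Submodule K Ω := fun s =>
    { carrier := {y : Ω | y ^ q ^ s = y}
      add_mem' := by
        intro a b ha hb
        simp only [Set.mem_setOf_eq] at *
        rw [hfrobhom, ha, hb]
      zero_mem' := by
        simp only [Set.mem_setOf_eq]
        exact zero_pow (by positivity)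
      smul_mem' := by
        intro cc y hy
        simp only [Set.mem_setOf_eq] at *
        rw [Algebra.smul_def, mul_pow, hy]
        rw [show algebraMap K Ω cc = ι cc from rfl, hfrob] } with hMsub_def
  have hmem_iff : ∀ (s : ℕ) (y : Ω), y ∈ Msub s ↔ y ^ q ^ s = y := fun s y => Iff.rfl
  have hMset : ∀ s, 1 ≤ s →
      ((Msub s : Set Ω)) = ↑((X ^ q ^ s - X : Polynomial Ω).roots.toFinset) := by
    intro s hs
    have hgne : (X ^ q ^ s - X : Polynomial Ω) ≠ 0 := by
      intro h0
      have := stmt5_deg Ω q s hq2 hs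
      rw [h0, natDegree_zero] at this
      have : 1 ≤ q ^ s := Nat.one_le_pow _ _ (by omega)
      omega
    ext y
    simp only [SetLike.mem_coe, hmem_iff, Finset.coe_sort_coe, Finset.mem_coe,
      Multiset.mem_toFinset, mem_roots hgne, IsRoot.def, eval_sub, eval_pow, eval_X]
    exact sub_eq_zero.symm
  have hcardMs : ∀ s, 1 ≤ s →
      Fintype.card (Msub s) = (X ^ q ^ s - X : Polynomial Ω).roots.toFinset.card := by
    intro s hs
    calc Fintype.card (Msub s) = Nat.card (Msub s) := (Nat.card_eq_fintype_card).symm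
      _ = ((Msub s : Set Ω)).ncard := rfl
      _ = _ := by rw [hMset s hs, Set.ncard_coe_finset]
  have hMk_le : Fintype.card (Msub k) ≤ q ^ k := by
    rw [hcardMs k hk1]
    calc ((X ^ q ^ k - X : Polynomial Ω).roots.toFinset.card)
        ≤ Multiset.card (X ^ q ^ k - X : Polynomial Ω).roots := Multiset.toFinset_card_le _
      _ ≤ (X ^ q ^ k - X : Polynomial Ω).natDegree := card_roots' _
      _ = q ^ k := stmt5_deg Ω q k hq2 hk1
  have hrank : ∀ i : Fin t, k * (i.1 + 1) ≤ Module.finrank K (Msub (k * (i.1 + 1))) := by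
    intro i
    have hs1 : 1 ≤ k * (i.1 + 1) := Nat.mul_pos hk1 (Nat.succ_pos _)
    have hdvd : k * (i.1 + 1) ∣ R := by
      rw [hR_def]
      exact Nat.mul_dvd_mul_left k (Nat.dvd_factorial (Nat.succ_pos _) i.2)
    have hge : q ^ (k * (i.1 + 1)) ≤ Fintype.card (Msub (k * (i.1 + 1))) := by
      rw [hcardMs _ hs1]
      exact stmt5_count Ω q _ R hq2 hs1 hR1 hdvd hqΩ hcardR
    have hpow : Fintype.card (Msub (k * (i.1 + 1)))
        = q ^ Module.finrank K (Msub (k * (i.1 + 1))) := by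
      rw [← hK]
      exact Module.card_eq_pow_finrank
    rw [hpow] at hge
    exact (Nat.pow_le_pow_iff_right (by omega)).mp hge
  -- the product space
  set NN := (∀ i : Fin t, ↥(Msub (k * (i.1 + 1)))) with hNN
  have hsum : (∑ i : Fin t, k * (i.1 + 1)) = k * m := by
    rw [← Finset.mul_sum]
    congr 1
    have h1 : ∑ i : Fin t, (i.1 + 1) = ∑ j ∈ range t, (j + 1) :=
      Fin.sum_univ_eq_sum_range _ _
    have h2 : ∑ j ∈ range (t + 1), j = (∑ j ∈ range t, (j + 1)) + 0 :=
      Finset.sum_range_succ' _ _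
    have h3 := Finset.sum_range_id_mul_two (t + 1)
    simp only [Nat.add_sub_cancel] at h3
    have hcomm : (t + 1) * t = t * (t + 1) := Nat.mul_comm _ _
    have h4 : (∑ j ∈ range (t + 1), j) * 2 = m * 2 := by
      rw [h3, hcomm, ← hm2]
    have h5 : (∑ j ∈ range (t + 1), j) = m :=
      Nat.eq_of_mul_eq_mul_right (by norm_num) h4
    rw [h1]
    calc (∑ j ∈ range t, (j + 1)) = (∑ j ∈ range t, (j + 1)) + 0 := (add_zero _).symm
      _ = ∑ j ∈ range (t + 1), j := h2.symm
      _ = m := h5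
  have hrankNN : n ≤ Module.finrank K NN := by
    show n ≤ Module.finrank K (∀ i : Fin t, ↥(Msub (k * (i.1 + 1))))
    rw [Module.finrank_pi_fintype]
    calc n ≤ k * m := le_of_lt hkm
      _ = ∑ i : Fin t, k * (i.1 + 1) := hsum.symm
      _ ≤ _ := Finset.sum_le_sum (fun i _ => hrank i)
  set D := Module.finrank K NN with hD
  set bN : Module.Basis (Fin D) K NN := Module.finBasis K NN with hbN
  set gmap : Fin D → Fin n := fun j => if h : (j : ℕ) < n then ⟨j.1, h⟩ else ⟨0, by omega⟩
    with hgmap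
  have hgsurj : Function.Surjective gmap := by
    intro i
    refine ⟨⟨i.1, lt_of_lt_of_le i.2 hrankNN⟩, ?_⟩
    simp only [hgmap]
    rw [dif_pos i.2]
  set ψ : (Fin n → K) →ₗ[K] NN :=
    (bN.equivFun.symm.toLinearMap).comp (LinearMap.funLeft K K gmap) with hψ
  have hψinj : Function.Injective ψ := by
    rw [hψ]
    rw [LinearMap.coe_comp]
    exact (bN.equivFun.symm.injective).comp
      (LinearMap.funLeft_injective_of_surjective K K gmap hgsurj)
  -- the polynomial map
  set P : NN → Ω := fun w => ∑ i : Fin t, ∏ j ∈ range (i.1 + 1), ((w i : Ω) ^ q ^ (k * j))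
    with hP
  have hprodshift : ∀ (x : Ω) (i : ℕ), x ^ q ^ (k * (i + 1)) = x →
      (∏ j ∈ range (i + 1), x ^ q ^ (k * j)) ^ q ^ k = ∏ j ∈ range (i + 1), x ^ q ^ (k * j) := by
    intro x i hx
    have h1 : (∏ j ∈ range (i + 1), x ^ q ^ (k * j)) ^ q ^ k
        = ∏ j ∈ range (i + 1), x ^ q ^ (k * (j + 1)) := by
      rw [← Finset.prod_pow]
      refine Finset.prod_congr rfl ?_
      intro j _
      have he1 : q ^ (k * j) * q ^ k = q ^ (k * (j + 1)) := by
        rw [← pow_add, Nat.mul_succ]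
      rw [← pow_mul, he1]
    rw [h1]
    by_cases hx0 : x = 0
    · subst hx0
      refine Finset.prod_congr rfl ?_
      intro j _
      rw [zero_pow (by positivity : q ^ (k * (j + 1)) ≠ 0),
        zero_pow (by positivity : q ^ (k * j) ≠ 0)]
    · have h2 := Finset.prod_range_succ (fun j => x ^ q ^ (k * j)) (i + 1)
      have h3 := Finset.prod_range_succ' (fun j => x ^ q ^ (k * j)) (i + 1)
      rw [h2] at h3
      simp only [Nat.mul_zero, pow_zero, pow_one] at h3
      rw [hx] at h3
      exact mul_right_cancel₀ hx0 h3.symm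
  have hPmem : ∀ w : NN, P w ∈ Msub k := by
    intro w
    refine Submodule.sum_mem _ ?_
    intro i _
    rw [hmem_iff]
    exact hprodshift _ _ (w i).2
  set Φ : (Fin n → K) → ↥(Msub k) := fun v => ⟨P (ψ v), hPmem _⟩ with hΦ
  haveI : Nonempty ↥(Msub k) := ⟨0⟩
  have hpig : Fintype.card ↥(Msub k) * q ^ (n - k) ≤ Fintype.card (Fin n → K) := by
    calc Fintype.card ↥(Msub k) * q ^ (n - k) ≤ q ^ k * q ^ (n - k) :=
          Nat.mul_le_mul_right _ hMk_le
      _ = q ^ n := by rw [← pow_add]; congr 1; omega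
      _ = Fintype.card (Fin n → K) := by rw [Fintype.card_fun, hK, Fintype.card_fin]
  obtain ⟨c, hc⟩ := Fintype.exists_le_card_fiber_of_mul_le_card Φ hpig
  refine ⟨{v | Φ v = c}, ?_, ?_⟩
  · -- evasiveness
    intro a b ha
    set A := ψ a with hA_def
    set B := ψ b with hB_def
    have hA : A ≠ 0 := by
      intro h0
      apply ha
      apply hψinj
      rw [map_zero, ← hA_def, h0]
    obtain ⟨i₁, hi₁⟩ : ∃ i, A i ≠ 0 := by
      by_contra hcon
      push_neg at hcon
      exact hA (funext fun i => hcon i)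
    set sfin : Finset (Fin t) := univ.filter (fun i => A i ≠ 0) with hsfin
    have hsne : sfin.Nonempty := ⟨i₁, by simp [hsfin, hi₁]⟩
    set i₀ := sfin.max' hsne with hi₀
    have hi₀A : A i₀ ≠ 0 := by
      have := sfin.max'_mem hsne
      simp only [hsfin, Finset.mem_filter] at this
      exact this.2
    have hmaxle : ∀ i, A i ≠ 0 → i ≤ i₀ := fun i hi =>
      Finset.le_max' _ _ (by simp [hsfin, hi])
    set d₀ : ℕ := i₀.1 + 1 with hd₀
    have hi₀Ω : ((A i₀ : Ω)) ≠ 0 := fun h0 => hi₀A (by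
      rwa [ZeroMemClass.coe_eq_zero] at h0)
    set G : Polynomial Ω := ∑ i : Fin t, ∏ j ∈ range (i.1 + 1),
        (C (((A i : Ω)) ^ q ^ (k * j)) * X + C (((B i : Ω)) ^ q ^ (k * j))) with hG
    set F : Polynomial Ω := G - C (c : Ω) with hF
    have hdegterm : ∀ i : Fin t, (∏ j ∈ range (i.1 + 1),
        (C (((A i : Ω)) ^ q ^ (k * j)) * X + C (((B i : Ω)) ^ q ^ (k * j)))).natDegree
        ≤ i.1 + 1 := by
      intro i
      have h2 : ∑ j ∈ range (i.1 + 1), (C (((A i : Ω)) ^ q ^ (k * j))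
          * X + C (((B i : Ω)) ^ q ^ (k * j))).natDegree ≤ ∑ j ∈ range (i.1 + 1), 1 :=
        Finset.sum_le_sum (fun j _ => natDegree_linear_le)
      have h3 := natDegree_prod_le (range (i.1 + 1)) (fun j => C (((A i : Ω)) ^ q ^ (k * j))
          * X + C (((B i : Ω)) ^ q ^ (k * j)))
      have h4 : (∑ j ∈ range (i.1 + 1), (1 : ℕ)) = i.1 + 1 := by simp
      exact le_trans h3 (le_trans h2 (le_of_eq h4))
    have hpowsplit : ∀ (x : K) (α β : Ω) (s : ℕ),
        (ι x * α + β) ^ q ^ s = ι x * α ^ q ^ s + β ^ q ^ s := by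
      intro x α β s
      rw [hfrobhom s, mul_pow, hfrob]
    have heval : ∀ x : K, F.eval (ι x) = P (ψ (x • a + b)) - (c : Ω) := by
      intro x
      have h1 : ψ (x • a + b) = x • A + B := by rw [map_add, map_smul]
      rw [hF, eval_sub, eval_C, h1]
      congr 1
      rw [hG, hP, eval_finset_sum]
      refine Finset.sum_congr rfl ?_
      intro i _
      rw [eval_prod]
      refine Finset.prod_congr rfl ?_
      intro j _
      have hcoe : (((x • A + B) i : Ω)) = ι x * (A i : Ω) + (B i : Ω) := by
        have h5 : (((x • A + B) i : Ω)) = x • (A i : Ω) + (B i : Ω) := rfl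
        rw [h5, Algebra.smul_def]
      rw [eval_add, eval_mul, eval_C, eval_C, eval_X, hcoe, hpowsplit]
      ring
    have hterm0 : ∀ i : Fin t, i ≠ i₀ →
        (∏ j ∈ range (i.1 + 1),
          (C (((A i : Ω)) ^ q ^ (k * j)) * X + C (((B i : Ω)) ^ q ^ (k * j)))).coeff d₀ = 0 := by
      intro i hi
      by_cases hAi : A i = 0
      · have hz : ∀ j : ℕ, ((A i : Ω)) ^ q ^ (k * j) = 0 := by
          intro j
          rw [hAi]
          simp only [ZeroMemClass.coe_zero]
          exact zero_pow (by positivity)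
        have hCprod : (∏ j ∈ range (i.1 + 1),
            (C (((A i : Ω)) ^ q ^ (k * j)) * X + C (((B i : Ω)) ^ q ^ (k * j))))
            = C (∏ j ∈ range (i.1 + 1), ((B i : Ω)) ^ q ^ (k * j)) := by
          rw [map_prod]
          refine Finset.prod_congr rfl ?_
          intro j _
          rw [hz, map_zero, zero_mul, zero_add]
        rw [hCprod, coeff_C, if_neg (by omega)]
      · have hlt : i < i₀ := lt_of_le_of_ne (hmaxle i hAi) hi
        refine coeff_eq_zero_of_natDegree_lt (lt_of_le_of_lt (hdegterm i) ?_)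
        have hlt' : i.1 < i₀.1 := hlt
        omega
    have htermmain : (∏ j ∈ range d₀,
        (C (((A i₀ : Ω)) ^ q ^ (k * j)) * X + C (((B i₀ : Ω)) ^ q ^ (k * j)))).coeff d₀
        = ∏ j ∈ range d₀, ((A i₀ : Ω)) ^ q ^ (k * j) := by
      have hane : ∀ j : ℕ, ((A i₀ : Ω)) ^ q ^ (k * j) ≠ 0 := fun j => pow_ne_zero _ hi₀Ω
      set PP : Polynomial Ω := ∏ j ∈ range d₀,
        (C (((A i₀ : Ω)) ^ q ^ (k * j)) * X + C (((B i₀ : Ω)) ^ q ^ (k * j))) with hPP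
      have hfne : ∀ j ∈ range d₀, (C (((A i₀ : Ω)) ^ q ^ (k * j))
          * X + C (((B i₀ : Ω)) ^ q ^ (k * j))) ≠ 0 := by
        intro j _ h0
        have hl := leadingCoeff_linear (hane j) (b := ((B i₀ : Ω)) ^ q ^ (k * j))
        rw [h0, leadingCoeff_zero] at hl
        exact hane j hl.symm
      have hdeg : PP.natDegree = d₀ := by
        rw [hPP, natDegree_prod _ _ hfne]
        rw [Finset.sum_congr rfl (fun j _ => natDegree_linear (hane j))]
        simp
      have hlc : PP.leadingCoeff = ∏ j ∈ range d₀, ((A i₀ : Ω)) ^ q ^ (k * j) := by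
        rw [hPP, leadingCoeff_prod]
        exact Finset.prod_congr rfl (fun j _ => leadingCoeff_linear (hane j))
      have hcd : PP.coeff d₀ = PP.leadingCoeff := by
        rw [← hdeg]
        exact coeff_natDegree
      rw [hcd, hlc]
    have hcoeffG : G.coeff d₀ ≠ 0 := by
      rw [hG, finset_sum_coeff]
      rw [Finset.sum_eq_single i₀ (fun i _ hi => hterm0 i hi) (by simp)]
      rw [htermmain]
      exact Finset.prod_ne_zero_iff.mpr (fun j _ => pow_ne_zero _ hi₀Ω)
    have hF0 : F ≠ 0 := by
      intro h0
      have hz : F.coeff d₀ = 0 := by rw [h0]; simp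
      rw [hF, coeff_sub, coeff_C, if_neg (by omega : ¬ d₀ = 0), sub_zero] at hz
      exact hcoeffG hz
    have hFdeg : F.natDegree ≤ t := by
      rw [hF]
      refine le_trans (natDegree_sub_le _ _) ?_
      rw [natDegree_C]
      simp only [max_le_iff]
      constructor
      · rw [hG]
        refine natDegree_sum_le_of_forall_le _ _ ?_
        intro i _
        exact le_trans (hdegterm i) (Nat.succ_le_of_lt i.2)
      · omega
    set T : Finset K := univ.filter (fun x => F.eval (ι x) = 0) with hT
    have hTcard : T.card ≤ t := by
      have h1 : ∀ x ∈ T, ι x ∈ F.roots.toFinset := by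
        intro x hx
        rw [Multiset.mem_toFinset, mem_roots hF0]
        exact (Finset.mem_filter.mp hx).2
      calc T.card ≤ F.roots.toFinset.card :=
            Finset.card_le_card_of_injOn ι h1 (hι_inj.injOn)
        _ ≤ Multiset.card F.roots := Multiset.toFinset_card_le _
        _ ≤ F.natDegree := card_roots' F
        _ ≤ t := hFdeg
    set χ : (Fin n → K) → K := fun v =>
      if h : ∃ x : K, v = x • a + b then h.choose else 0 with hχ
    have hχspec : ∀ v, (∃ x : K, v = x • a + b) → v = (χ v) • a + b := by
      intro v hv
      rw [hχ]
      simp only [dif_pos hv]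
      exact hv.choose_spec
    refine le_trans (Set.ncard_le_ncard_of_injOn χ ?_ ?_ (Set.toFinite (↑T : Set K))) ?_
    · intro v hv
      obtain ⟨hvS, hvx⟩ := hv
      have hveq : v = (χ v) • a + b := hχspec v hvx
      show χ v ∈ (↑T : Set K)
      simp only [hT, Finset.coe_filter, Finset.mem_univ, true_and, Set.mem_setOf_eq]
      rw [heval (χ v), ← hveq]
      have : P (ψ v) = (c : Ω) := congrArg Subtype.val hvS
      rw [this, sub_self]
    · intro v1 h1 v2 h2 hvv
      rw [hχspec v1 h1.2, hχspec v2 h2.2, hvv]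
    · rw [Set.ncard_coe_finset]
      exact hTcard
  · -- size
    have hSeq : ({v | Φ v = c} : Set (Fin n → K))
        = ↑(univ.filter fun v => Φ v = c) := by
      ext v
      simp
    have hncard : q ^ (n - k) ≤ ({v | Φ v = c} : Set (Fin n → K)).ncard := by
      rw [hSeq, Set.ncard_coe_finset]
      exact hc
    have hq1R : (1 : ℝ) ≤ (q : ℝ) := by exact_mod_cast (by omega : 1 ≤ q)
    have hexp : (n : ℝ) * (1 - 2 / ((t : ℝ) ^ 2 + t)) - 1 ≤ ((n - k : ℕ) : ℝ) := by
      have hcast : ((n - k : ℕ) : ℝ) = (n : ℝ) - k := by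
        rw [Nat.cast_sub hkn]
      have hm0 : (0 : ℝ) < (m : ℝ) := by
        have : (3 : ℝ) ≤ (m : ℝ) := by exact_mod_cast hm3
        linarith
      have h2m : (m : ℝ) * 2 = (t : ℝ) ^ 2 + (t : ℝ) := by
        have : ((m * 2 : ℕ) : ℝ) = ((t * (t + 1) : ℕ) : ℝ) := by rw [hm2]
        push_cast at this
        nlinarith [this]
      have hkle : (k : ℝ) ≤ (n : ℝ) / (m : ℝ) + 1 := by
        rw [hk_def]
        push_cast
        have := Nat.cast_div_le (α := ℝ) (m := n) (n := m)
        linarith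
      have h2d : 2 / ((t : ℝ) ^ 2 + (t : ℝ)) = 1 / (m : ℝ) := by
        rw [← h2m]
        field_simp
      have hnd : (n : ℝ) * (1 - 1 / (m : ℝ)) = (n : ℝ) - (n : ℝ) / (m : ℝ) := by
        field_simp
      rw [hcast, h2d, hnd]
      linarith
    calc (q : ℝ) ^ ((n : ℝ) * (1 - 2 / ((t : ℝ) ^ 2 + t)) - 1)
        ≤ (q : ℝ) ^ (((n - k : ℕ) : ℝ)) := Real.rpow_le_rpow_of_exponent_le hq1R hexp
      _ = ((q ^ (n - k) : ℕ) : ℝ) := by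
          rw [Real.rpow_natCast]
          push_cast
          ring
      _ ≤ (({v | Φ v = c} : Set (Fin n → K)).ncard : ℝ) := by exact_mod_cast hncard
end

section
/- Let q be a prime power, 2 ≤ t ≤ q - 1, V = F_q × F_{q^2} × ⋯ × F_{q^t}, and P(v) = v_1 + N_2(v_2) + ⋯ + N_t(v_t). Fix u ∈ F_q and b ∈ V. For every polynomial f ∈ F_q[X] of degree at most t with constant term equal to P(b) - u, there exists a ∈ V such that P(aX + b) - u = f(X) as polynomials in X over F_q. -/
open Polynomial Finset

section Aux
variable (K L : Type*) [Field K] [Fintype K] [Field L] [Fintype L] [Algebra K L]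

/-- Frobenius-power formula for the norm of finite fields. -/
lemma norm_eq_pow_aux (x : L) :
    algebraMap K L (Algebra.norm K x) =
      x ^ (∑ i ∈ Finset.range (Module.finrank K L), Fintype.card K ^ i) := by
  classical
  set q := Fintype.card K with hqdef
  set n := Module.finrank K L with hndef
  obtain ⟨k, hp, hq⟩ := FiniteField.card K (ringChar K)
  haveI : Fact (Nat.Prime (ringChar K)) := ⟨hp⟩
  haveI : CharP L (ringChar K) := charP_of_injective_algebraMap
    (algebraMap K L).injective (ringChar K)
  have hcomm : ∀ c : K, (iterateFrobenius L (ringChar K) k) (algebraMap K L c)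
      = algebraMap K L c := by
    intro c
    rw [iterateFrobenius_def, ← map_pow, ← hq, FiniteField.pow_card]
  let φ₀ : L →ₐ[K] L := ⟨iterateFrobenius L (ringChar K) k, hcomm⟩
  have hφ₀ : Function.Bijective φ₀ := Finite.injective_iff_bijective.mp
    (iterateFrobenius L (ringChar K) k).injective
  let φ : L ≃ₐ[K] L := AlgEquiv.ofBijective φ₀ hφ₀
  have hφ : ∀ y : L, φ y = y ^ q := by
    intro y
    show iterateFrobenius L (ringChar K) k y = y ^ q
    rw [iterateFrobenius_def, hqdef, hq]
  have hφpow : ∀ (i : ℕ) (y : L), (φ ^ i) y = y ^ q ^ i := by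
    intro i
    induction i with
    | zero => intro y; simp
    | succ i ih =>
      intro y
      rw [pow_succ', AlgEquiv.mul_apply, hφ, ih, ← pow_mul, pow_succ, mul_comm (q ^ i)]
  have hq2 : 2 ≤ q := Fintype.one_lt_card
  have hcardL : Fintype.card L = q ^ n := Module.card_eq_pow_finrank
  have hcardAut : Fintype.card (L ≃ₐ[K] L) = n := by
    rw [← Nat.card_eq_fintype_card]; exact IsGalois.card_aut_eq_finrank K L
  have hdvd : orderOf φ ∣ n := hcardAut ▸ orderOf_dvd_card
  have hle : n ≤ orderOf φ := by
    by_contra hlt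
    push_neg at hlt
    set d := orderOf φ with hd
    have hfix : ∀ y : L, y ^ q ^ d = y := by
      intro y
      have : (φ ^ d) y = y := by rw [pow_orderOf_eq_one φ]; rfl
      rwa [hφpow] at this
    obtain ⟨g, hg⟩ := IsCyclic.exists_generator (α := Lˣ)
    have hog : orderOf g = q ^ n - 1 := by
      rw [orderOf_eq_card_of_forall_mem_zpowers hg, Nat.card_eq_fintype_card, Fintype.card_units, hcardL]
    have hgfix : g ^ (q ^ d - 1) = 1 := by
      have h1 : (g : L) ^ q ^ d = (g : L) := hfix g
      have h2 : (g : L) ^ (q ^ d - 1) * g = (g : L) := by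
        rw [← pow_succ, Nat.sub_add_cancel (Nat.one_le_pow _ _ (by omega))]
        exact h1
      have h3 : (g : L) ^ (q ^ d - 1) = 1 := by
        have := mul_right_cancel₀ g.ne_zero (h2.trans (one_mul (g : L)).symm)
        exact this
      ext
      push_cast
      exact h3
    have hdd : q ^ n - 1 ∣ q ^ d - 1 := hog ▸ orderOf_dvd_of_pow_eq_one hgfix
    have hdpos : 0 < d := orderOf_pos φ
    have h2q : 2 ≤ q ^ d := le_trans hq2 (Nat.le_self_pow hdpos.ne' q)
    have h1 : q ^ n - 1 ≤ q ^ d - 1 := Nat.le_of_dvd (by omega) hdd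
    have h2 : q ^ n ≤ q ^ d := by
      have : 1 ≤ q ^ n := Nat.one_le_pow _ _ (by omega)
      omega
    have := (Nat.pow_le_pow_iff_right hq2).mp h2
    omega
  have hnpos : 0 < n := Module.finrank_pos
  have horder : orderOf φ = n := le_antisymm (Nat.le_of_dvd hnpos hdvd) hle
  have hinj : Function.Injective (fun i : Fin n => φ ^ (i : ℕ)) := by
    intro i j hij
    apply Fin.ext
    refine pow_injOn_Iio_orderOf ?_ ?_ hij
    · simpa [horder] using i.isLt
    · simpa [horder] using j.isLt
  have hbij : Function.Bijective (fun i : Fin n => φ ^ (i : ℕ)) :=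
    (Fintype.bijective_iff_injective_and_card _).mpr ⟨hinj, by simp [hcardAut]⟩
  rw [Algebra.norm_eq_prod_automorphisms]
  rw [← Fintype.prod_bijective _ hbij (fun i : Fin n => x ^ q ^ (i : ℕ))
    (fun σ => σ x) (fun i => (hφpow i x).symm)]
  rw [Finset.prod_pow_eq_pow_sum]
  congr 1
  exact Fin.sum_univ_eq_sum_range _ n

/-- The geometric sum identity in `ℕ`. -/
lemma geom_sum_nat_aux (q n : ℕ) (hq : 1 ≤ q) :
    (∑ i ∈ Finset.range n, q ^ i) * (q - 1) = q ^ n - 1 := by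
  have h := geom_sum_mul (q : ℤ) n
  have h1 : 1 ≤ q ^ n := Nat.one_le_pow _ _ (by omega)
  zify [hq, h1]
  push_cast at h ⊢
  linarith

/-- The norm of a finite field extension is surjective. -/
lemma norm_surjective_aux : Function.Surjective (Algebra.norm K : L → K) := by
  classical
  intro y
  set q := Fintype.card K with hqdef
  set n := Module.finrank K L with hndef
  set m := ∑ i ∈ Finset.range n, q ^ i with hmdef
  have hq2 : 2 ≤ q := Fintype.one_lt_card
  have hnpos : 0 < n := Module.finrank_pos
  have hmpos : 0 < m := by
    rw [hmdef]
    apply Finset.sum_pos (fun i _ => Nat.pow_pos (by omega))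
    exact Finset.nonempty_range_iff.mpr (by omega)
  have hmq : m * (q - 1) = q ^ n - 1 := geom_sum_nat_aux q n (by omega)
  by_cases hy : y = 0
  · exact ⟨0, by rw [Algebra.norm_zero, hy]⟩
  obtain ⟨g, hg⟩ := IsCyclic.exists_generator (α := Lˣ)
  have hcardL : Fintype.card L = q ^ n := Module.card_eq_pow_finrank
  have hog : orderOf g = q ^ n - 1 := by
    rw [orderOf_eq_card_of_forall_mem_zpowers hg, Nat.card_eq_fintype_card, Fintype.card_units, hcardL]
  -- the norm as a map on units
  let N : Lˣ →* Kˣ := Units.map (Algebra.norm K : L →* K)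
  have hNg : ∀ u : Lˣ, (N u : K) = Algebra.norm K (u : L) := fun u => rfl
  have hordNg : orderOf (N g) = q - 1 := by
    have e1 : orderOf (N g) = orderOf ((N g : K)) := orderOf_units.symm
    have e2 : orderOf ((N g : K)) = orderOf (algebraMap K L (N g : K)) :=
      (orderOf_injective (algebraMap K L).toMonoidHom
        (algebraMap K L).injective _).symm
    have e3 : algebraMap K L ((N g : K)) = (g : L) ^ m := by
      rw [hNg, norm_eq_pow_aux]
    have e4 : orderOf ((g : L) ^ m) = orderOf ((g ^ m : Lˣ) : L) := by push_cast; rfl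
    have e5 : orderOf ((g ^ m : Lˣ) : L) = orderOf (g ^ m) := orderOf_units
    have e6 : orderOf (g ^ m) = orderOf g / Nat.gcd (orderOf g) m := orderOf_pow g
    have e7 : Nat.gcd (orderOf g) m = m := by
      rw [hog]
      exact Nat.gcd_eq_right ⟨q - 1, hmq.symm⟩
    rw [e1, e2, e3, e4, e5, e6, e7, hog, ← hmq, Nat.mul_div_cancel_left _ hmpos]
  have hcardK : Fintype.card Kˣ = q - 1 := by rw [Fintype.card_units, hqdef]
  have htop : Subgroup.zpowers (N g) = ⊤ := by
    apply Subgroup.eq_top_of_card_eq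
    rw [Nat.card_zpowers, hordNg, Nat.card_eq_fintype_card, hcardK]
  have hy' : Units.mk0 y hy ∈ Subgroup.zpowers (N g) := htop ▸ Subgroup.mem_top _
  obtain ⟨j, hj⟩ := hy'
  refine ⟨((g ^ j : Lˣ) : L), ?_⟩
  have : N (g ^ j) = Units.mk0 y hy := by rw [map_zpow]; exact hj
  have := congrArg (Units.val) this
  rw [hNg] at this
  simpa using this

/-- The norm of `x•a + b` is a polynomial in `x` with top coefficient `norm a`. -/
lemma norm_poly_aux (a b : L) :
    ∃ h : Polynomial K, h.natDegree ≤ Module.finrank K L ∧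
      h.coeff (Module.finrank K L) = Algebra.norm K a ∧
      ∀ x : K, h.eval x = Algebra.norm K (algebraMap K L x * a + b) := by
  classical
  set n := Module.finrank K L with hndef
  have hnpos : 0 < n := Module.finrank_pos
  by_cases ha : a = 0
  · refine ⟨C (Algebra.norm K b), ?_, ?_, ?_⟩
    · simpa using Nat.zero_le n
    · rw [coeff_C, if_neg (by omega), ha, Algebra.norm_zero]
    · intro x; rw [eval_C, ha, mul_zero, zero_add]
  · set β := Module.finBasis K L
    set M := Algebra.leftMulMatrix β (-(a⁻¹ * b)) with hM
    refine ⟨C (Algebra.norm K a) * M.charpoly, ?_, ?_, ?_⟩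
    · apply le_trans (natDegree_mul_le)
      simp [Matrix.charpoly_natDegree_eq_dim]
      exact le_rfl
    · rw [coeff_C_mul]
      have : M.charpoly.coeff n = 1 := by
        have hmonic := Matrix.charpoly_monic M
        have hdeg : M.charpoly.natDegree = n := by
          simp [Matrix.charpoly_natDegree_eq_dim]
          rfl
        rw [← hdeg]
        exact hmonic.coeff_natDegree
      rw [this, mul_one]
    · intro x
      rw [eval_mul, eval_C]
      have heval : M.charpoly.eval x = (Matrix.scalar (Fin n) x - M).det := by
        rw [Matrix.charpoly]
        have h := RingHom.map_det (evalRingHom x) (Matrix.charmatrix M)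
        rw [RingHom.mapMatrix_apply] at h
        rw [show (Matrix.charmatrix M).det.eval x
            = evalRingHom x (Matrix.charmatrix M).det from rfl, h]
        congr 1
        ext i j
        by_cases hij : i = j
        · subst hij
          simp [Matrix.charmatrix_apply_eq, Matrix.scalar_apply]
        · simp [Matrix.charmatrix_apply_ne _ _ _ hij, Matrix.scalar_apply,
            Matrix.diagonal_apply_ne _ hij]
      rw [heval]
      have hsc : Matrix.scalar (Fin n) x = Algebra.leftMulMatrix β (algebraMap K L x) := by
        rw [AlgHom.commutes, Matrix.algebraMap_eq_diagonal]
        rfl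
      rw [hsc, ← map_sub, ← Algebra.norm_eq_matrix_det β, ← map_mul]
      congr 1
      field_simp
      ring

end Aux

/-- With `V = F_q × F_{q²} × ⋯ × F_{q^t}`,
`P(v) = v₁ + N₂(v₂) + ⋯ + N_t(v_t)`, fixed `u ∈ F_q` and `b ∈ V`: for every
polynomial `f ∈ F_q[X]` of degree at most `t` with constant term `P(b) - u`,
there is a slope `a ∈ V` with `P(x•a + b) - u = f(x)` for all `x ∈ F_q`
(equivalently, as polynomials of degree at most `t < q` over `F_q`). -/
theorem stmt6 (q t : ℕ) (hq : IsPrimePow q) (ht : 2 ≤ t) (htq : t ≤ q - 1)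
    (K : Type) [Field K] [Fintype K] (hK : Fintype.card K = q)
    (L : Fin t → Type) [∀ i, Field (L i)] [∀ i, Fintype (L i)] [∀ i, Algebra K (L i)]
    (hL : ∀ i : Fin t, Fintype.card (L i) = q ^ ((i : ℕ) + 1))
    (P : (∀ i, L i) → K) (hP : ∀ v, P v = ∑ i, Algebra.norm K (v i))
    (u : K) (b : ∀ i, L i)
    (f : Polynomial K) (hf : f.degree ≤ (t : ℕ)) (hf0 : f.coeff 0 = P b - u) :
    ∃ a : ∀ i, L i, ∀ x : K, P (x • a + b) - u = f.eval x := by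
  classical
  have hq2 : 2 ≤ q := hq.two_le
  -- the finrank of each L i is i + 1
  have hrank : ∀ i : Fin t, Module.finrank K (L i) = (i : ℕ) + 1 := by
    intro i
    have h1 : Fintype.card (L i) = Fintype.card K ^ Module.finrank K (L i) :=
      Module.card_eq_pow_finrank
    rw [hK, hL i] at h1
    exact (Nat.pow_right_injective hq2 h1.symm)
  -- polynomial families
  have key : ∀ (i : Fin t) (a : L i), ∃ h : Polynomial K,
      h.natDegree ≤ (i : ℕ) + 1 ∧ h.coeff ((i : ℕ) + 1) = Algebra.norm K a ∧
      ∀ x : K, h.eval x = Algebra.norm K (x • a + b i) := by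
    intro i a
    obtain ⟨h, h1, h2, h3⟩ := norm_poly_aux K (L i) a (b i)
    rw [hrank i] at h1 h2
    exact ⟨h, h1, h2, fun x => by rw [h3 x, Algebra.smul_def]⟩
  choose hp hdeg hcoeff heval using key
  set S : (∀ i, L i) → Polynomial K := fun a => ∑ i, hp i (a i) with hS
  -- downward induction
  have main : ∀ d : ℕ, d ≤ t → ∃ a : ∀ i, L i,
      ∀ j : ℕ, t + 1 - d ≤ j → (S a).coeff j = (f + Polynomial.C u).coeff j := by
    intro d
    induction d with
    | zero =>
      intro _
      refine ⟨0, fun j hj => ?_⟩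
      have hj' : t + 1 ≤ j := by omega
      have hL1 : (S 0).coeff j = 0 := by
        rw [hS, Polynomial.finset_sum_coeff]
        apply Finset.sum_eq_zero
        intro i _
        apply Polynomial.coeff_eq_zero_of_natDegree_lt
        have := hdeg i ((0 : ∀ i, L i) i)
        have hi := i.isLt
        omega
      have hR1 : (f + Polynomial.C u).coeff j = 0 := by
        rw [Polynomial.coeff_add, Polynomial.coeff_C, if_neg (by omega),
          Polynomial.coeff_eq_zero_of_degree_lt, add_zero]
        apply lt_of_le_of_lt hf
        exact_mod_cast Nat.cast_lt.mpr (by omega)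
      rw [hL1, hR1]
    | succ d ih =>
      intro hd
      obtain ⟨a, ha⟩ := ih (by omega)
      set k := t - d with hk
      have hk1 : 1 ≤ k := by omega
      have hkt : k ≤ t := by omega
      have hkd : t + 1 - d = k + 1 := by omega
      have hkd' : t + 1 - (d + 1) = k := by omega
      set i₀ : Fin t := ⟨k - 1, by omega⟩ with hi₀
      have hi₀k : (i₀ : ℕ) + 1 = k := by simp [hi₀]; omega
      obtain ⟨c, hc⟩ := norm_surjective_aux K (L i₀)
        ((f + Polynomial.C u).coeff k - ∑ i ∈ Finset.univ.erase i₀, (hp i (a i)).coeff k)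
      set a' := Function.update a i₀ c with ha'
      refine ⟨a', fun j hj => ?_⟩
      rw [hkd'] at hj
      have hsplit : ∀ (v : ∀ i, L i), (S v).coeff j
          = (hp i₀ (v i₀)).coeff j + ∑ i ∈ Finset.univ.erase i₀, (hp i (v i)).coeff j := by
        intro v
        rw [hS, Polynomial.finset_sum_coeff]
        exact (Finset.add_sum_erase _ _ (Finset.mem_univ i₀)).symm
      have herase : ∀ i ∈ Finset.univ.erase i₀, (hp i (a' i)).coeff j = (hp i (a i)).coeff j := by
        intro i hi
        rw [ha', Function.update_of_ne (Finset.ne_of_mem_erase hi)]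
      have ha'i₀ : a' i₀ = c := by rw [ha', Function.update_self]
      rcases eq_or_lt_of_le hj with hjk | hjk
      · -- j = k
        rw [hsplit, Finset.sum_congr rfl herase, ha'i₀, ← hjk]
        have hcoeffc : (hp i₀ c).coeff k = Algebra.norm K c := by
          rw [← hi₀k]; exact hcoeff i₀ c
        rw [hcoeffc, hc]
        ring
      · -- j > k
        have hz : ∀ cc : L i₀, (hp i₀ cc).coeff j = 0 := by
          intro cc
          apply Polynomial.coeff_eq_zero_of_natDegree_lt
          have := hdeg i₀ cc
          omega
        have hold := ha j (by omega)
        rw [hsplit, hz] at hold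
        rw [hsplit, Finset.sum_congr rfl herase, hz]
        exact hold
  obtain ⟨a, ha⟩ := main t le_rfl
  have hSa : S a = f + Polynomial.C u := by
    ext j
    rcases Nat.eq_zero_or_pos j with hj | hj
    · subst hj
      have hL0 : (S a).coeff 0 = P b := by
        rw [hS, Polynomial.finset_sum_coeff, hP b]
        apply Finset.sum_congr rfl
        intro i _
        rw [Polynomial.coeff_zero_eq_eval_zero, heval, zero_smul, zero_add]
      rw [hL0, Polynomial.coeff_add, Polynomial.coeff_C, if_pos rfl, hf0]
      ring
    · exact ha j (by omega)
  refine ⟨a, fun x => ?_⟩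
  have : P (x • a + b) = (S a).eval x := by
    rw [hP, hS, Polynomial.eval_finset_sum]
    apply Finset.sum_congr rfl
    intro i _
    rw [heval]
    rfl
  rw [this, hSa, Polynomial.eval_add, Polynomial.eval_C]
  ring
end

section
/- Let q be a prime power. If the points of affine space AG(n, q) can be colored with k colors so that no affine line is monochromatic, then the points of projective space PG(n, q) can be colored with k colors so that no projective line is monochromatic. -/
open Projectivization

section Aux

variable {n : ℕ} {K : Type} [Field K]

open scoped Classical in
noncomputable def lastNZ (v : Fin (n+1) → K) (hv : v ≠ 0) : Fin (n+1) :=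
  (Finset.univ.filter (fun i => v i ≠ 0)).max' (by
    obtain ⟨i, hi⟩ := Function.ne_iff.mp hv
    exact ⟨i, by simp only [Finset.mem_filter, Finset.mem_univ, true_and]; simpa using hi⟩)

open scoped Classical in
theorem apply_lastNZ_ne (v : Fin (n+1) → K) (hv : v ≠ 0) : v (lastNZ v hv) ≠ 0 := by
  have := Finset.max'_mem (Finset.univ.filter (fun i => v i ≠ 0)) (by
    obtain ⟨i, hi⟩ := Function.ne_iff.mp hv
    exact ⟨i, by simp only [Finset.mem_filter, Finset.mem_univ, true_and]; simpa using hi⟩)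
  simpa [lastNZ] using (Finset.mem_filter.mp this).2

open scoped Classical in
theorem le_lastNZ {v : Fin (n+1) → K} {hv : v ≠ 0} {i : Fin (n+1)} (hi : v i ≠ 0) :
    i ≤ lastNZ v hv :=
  Finset.le_max' _ _ (by simp [hi])

open scoped Classical in
theorem lastNZ_eq {v : Fin (n+1) → K} {hv : v ≠ 0} {j : Fin (n+1)} (hj : v j ≠ 0)
    (hmax : ∀ i, v i ≠ 0 → i ≤ j) : lastNZ v hv = j := by
  refine le_antisymm (Finset.max'_le _ _ _ fun i hi => ?_) (le_lastNZ hj)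
  exact hmax i (by simpa using (Finset.mem_filter.mp hi).2)

open scoped Classical in
noncomputable def phi (v : Fin (n+1) → K) (hv : v ≠ 0) : Fin n → K :=
  fun i => if i.castSucc < lastNZ v hv then (v (lastNZ v hv))⁻¹ * v i.castSucc else 0

theorem lastNZ_smul (v : Fin (n+1) → K) (hv : v ≠ 0) (t : K) (ht : t ≠ 0)
    (hv' : t • v ≠ 0) : lastNZ (t • v) hv' = lastNZ v hv := by
  refine lastNZ_eq ?_ ?_
  · simp only [Pi.smul_apply, smul_eq_mul]
    exact mul_ne_zero ht (apply_lastNZ_ne v hv)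
  · intro i hi
    refine le_lastNZ ?_
    intro h
    simp [h] at hi

theorem phi_smul (v : Fin (n+1) → K) (hv : v ≠ 0) (t : K) (ht : t ≠ 0)
    (hv' : t • v ≠ 0) : phi (t • v) hv' = phi v hv := by
  funext i
  simp only [phi, lastNZ_smul v hv t ht hv', Pi.smul_apply, smul_eq_mul]
  split
  · rw [mul_inv]
    field_simp
  · rfl

theorem phi_congr {v v' : Fin (n+1) → K} (hv : v ≠ 0) (hv' : v' ≠ 0) (h : v = v') :
    phi v hv = phi v' hv' := by subst h; rfl

end Aux

set_option maxHeartbeats 2000000 in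
/-- If the points of `AG(n,q) = F_q^n` can be colored with `k`
colors so that no affine line is monochromatic, then the points of `PG(n,q)`
(the projectivization of `F_q^{n+1}`) can be colored with `k` colors so that
no projective line (set of points lying in a 2-dimensional subspace) is
monochromatic. -/
theorem stmt8 (q n k : ℕ) (hq : IsPrimePow q)
    (K : Type) [Field K] [Fintype K] (hK : Fintype.card K = q)
    (c : (Fin n → K) → Fin k)
    (hc : ∀ a b : Fin n → K, a ≠ 0 →
      ∃ x y : K, c (x • a + b) ≠ c (y • a + b)) :
    ∃ C : Projectivization K (Fin (n + 1) → K) → Fin k,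
      ∀ W : Submodule K (Fin (n + 1) → K), Module.finrank K W = 2 →
        ∃ p₁ p₂ : Projectivization K (Fin (n + 1) → K),
          p₁.submodule ≤ W ∧ p₂.submodule ≤ W ∧ C p₁ ≠ C p₂ := by
  classical
  set C : Projectivization K (Fin (n + 1) → K) → Fin k :=
    fun p => c (phi p.rep p.rep_nonzero) with hC
  have hCmk : ∀ (v : Fin (n+1) → K) (hv : v ≠ 0), C (mk K v hv) = c (phi v hv) := by
    intro v hv
    obtain ⟨t, ht⟩ : ∃ t : Kˣ, t • v = (mk K v hv).rep := by
      rw [← mk_eq_mk_iff K _ _ (mk K v hv).rep_nonzero hv, mk_rep]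
    have ht' : (t : K) • v = (mk K v hv).rep := by rw [← Units.smul_def]; exact ht
    have htv : (t : K) • v ≠ 0 := by
      rw [ht']; exact (mk K v hv).rep_nonzero
    simp only [hC]
    rw [phi_congr (mk K v hv).rep_nonzero htv ht'.symm,
      phi_smul v hv (t : K) t.ne_zero htv]
  refine ⟨C, ?_⟩
  intro W hW
  -- the largest coordinate supported on W
  have hWbot : W ≠ ⊥ := by
    intro h
    rw [h] at hW
    simp at hW
  obtain ⟨u₀, hu₀W, hu₀⟩ := (Submodule.ne_bot_iff W).mp hWbot
  have hSne : (Finset.univ.filter (fun i => ∃ v ∈ W, v i ≠ 0)).Nonempty := by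
    obtain ⟨i, hi⟩ := Function.ne_iff.mp hu₀
    exact ⟨i, by simp only [Finset.mem_filter, Finset.mem_univ, true_and]; exact ⟨u₀, hu₀W, hi⟩⟩
  set j₀ : Fin (n+1) := (Finset.univ.filter (fun i => ∃ v ∈ W, v i ≠ 0)).max' hSne with hj₀
  obtain ⟨uw, huwW, huwj⟩ : ∃ v ∈ W, v j₀ ≠ 0 := by
    have := Finset.max'_mem _ hSne
    simpa [hj₀] using (Finset.mem_filter.mp this).2
  have hvanish : ∀ v ∈ W, ∀ i : Fin (n+1), j₀ < i → v i = 0 := by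
    intro v hv i hij
    by_contra h
    have : i ≤ j₀ := Finset.le_max' _ _ (by
      simp only [Finset.mem_filter, Finset.mem_univ, true_and]; exact ⟨v, hv, h⟩)
    exact absurd hij (not_lt.mpr this)
  -- normalize u
  set u : Fin (n+1) → K := (uw j₀)⁻¹ • uw with hu
  have huW : u ∈ W := W.smul_mem _ huwW
  have huj : u j₀ = 1 := by
    simp [hu, inv_mul_cancel₀ huwj]
  -- find w ∈ W, w j₀ = 0, w ≠ 0
  have hnotle : ¬ W ≤ K ∙ u := by
    intro hle
    have h1 : Module.finrank K W ≤ Module.finrank K (K ∙ u) := Submodule.finrank_mono hle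
    have hu0 : u ≠ 0 := by
      intro h; rw [h] at huj; simp at huj
    rw [hW, finrank_span_singleton hu0] at h1
    exact absurd h1 (by norm_num)
  obtain ⟨z, hzW, hz⟩ : ∃ z ∈ W, z ∉ K ∙ u := by
    by_contra h
    push_neg at h
    exact hnotle h
  set w : Fin (n+1) → K := z - z j₀ • u with hw
  have hwW : w ∈ W := W.sub_mem hzW (W.smul_mem _ huW)
  have hwj : w j₀ = 0 := by
    simp [hw, huj]
  have hwne : w ≠ 0 := by
    intro h
    apply hz
    rw [Submodule.mem_span_singleton]
    refine ⟨z j₀, ?_⟩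
    have := sub_eq_zero.mp (by rw [← hw, h])
    exact this.symm
  -- the affine line data
  set a : Fin n → K := fun i => if i.castSucc < j₀ then w i.castSucc else 0 with ha
  set b : Fin n → K := fun i => if i.castSucc < j₀ then u i.castSucc else 0 with hb
  have hane : a ≠ 0 := by
    obtain ⟨i₀, hi₀⟩ := Function.ne_iff.mp hwne
    have hle : i₀ ≤ j₀ := by
      by_contra h
      exact hi₀ (hvanish w hwW i₀ (not_le.mp h))
    have hlt : i₀ < j₀ := lt_of_le_of_ne hle (by
      intro h; rw [h] at hi₀; exact hi₀ hwj)
    have hn : (i₀ : ℕ) < n := by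
      have h2 : (j₀ : ℕ) ≤ n := Nat.lt_succ_iff.mp j₀.isLt
      exact lt_of_lt_of_le (Fin.lt_def.mp hlt) h2
    intro h
    have : a ⟨i₀, hn⟩ = 0 := by rw [h]; rfl
    rw [ha] at this
    simp only [Fin.castSucc_mk] at this
    rw [if_pos (by simpa using hlt)] at this
    exact hi₀ (by simpa using this)
  obtain ⟨x, y, hxy⟩ := hc a b hane
  -- the two points
  have key : ∀ s : K, ∃ h1 : u + s • w ≠ 0,
      C (mk K (u + s • w) h1) = c (s • a + b) ∧ (u + s • w) ∈ W := by
    intro s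
    have hmem : u + s • w ∈ W := W.add_mem huW (W.smul_mem _ hwW)
    have hval : (u + s • w) j₀ = 1 := by
      simp [huj, hwj]
    have hne : u + s • w ≠ 0 := by
      intro h
      rw [h] at hval
      simp at hval
    refine ⟨hne, ?_, hmem⟩
    rw [hCmk]
    have hlz : lastNZ (u + s • w) hne = j₀ := by
      refine lastNZ_eq (by rw [hval]; exact one_ne_zero) ?_
      intro i hi
      by_contra h
      exact hi (hvanish _ hmem i (not_le.mp h))
    have hphi : phi (u + s • w) hne = s • a + b := by
      funext i
      simp only [phi, hlz, hval, inv_one, one_mul, Pi.add_apply, Pi.smul_apply, ha, hb,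
      smul_eq_mul]
      by_cases h : i.castSucc < j₀
      · simp only [if_pos h]
        ring
      · simp only [if_neg h]
        ring
    rw [hphi]
  obtain ⟨h1, hc1, hm1⟩ := key x
  obtain ⟨h2, hc2, hm2⟩ := key y
  refine ⟨mk K (u + x • w) h1, mk K (u + y • w) h2, ?_, ?_, ?_⟩
  · rw [submodule_mk, Submodule.span_singleton_le_iff_mem]
    exact hm1
  · rw [submodule_mk, Submodule.span_singleton_le_iff_mem]
    exact hm2
  · rw [hc1, hc2]
    exact hxy
end

section
/- Let q ≥ 3 be a prime power and n = q(q-1)/2. Then the chromatic number χ_q(n+1) of the projective space PG(n, q) is at most q; that is, the points of PG(n, q) can be partitioned into q classes none of which contains a full projective line. -/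
open Projectivization

open Polynomial Module

noncomputable section


variable {K : Type} [Field K]

theorem exists_norm_poly (L : Type) [Field L] [Algebra K L] [FiniteDimensional K L]
    (u w : L) :
    ∃ f : K[X], (∀ t : K, f.eval t = Algebra.norm K (u + t • w)) ∧
      f.natDegree ≤ finrank K L ∧
      (w = 0 → f.natDegree = 0) ∧
      (w ≠ 0 → f.coeff (finrank K L) ≠ 0) := by
  classical
  set d := finrank K L
  let b : Basis (Fin d) K L := Module.finBasis K L
  let A : Matrix (Fin d) (Fin d) K := Algebra.leftMulMatrix b w
  let B : Matrix (Fin d) (Fin d) K := Algebra.leftMulMatrix b u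
  refine ⟨Matrix.det ((X : K[X]) • A.map C + B.map C), ?_, ?_, ?_, ?_⟩
  · intro t
    have h1 : eval t (Matrix.det ((X : K[X]) • A.map C + B.map C))
        = Matrix.det (((X : K[X]) • A.map C + B.map C).map (evalRingHom t)) := by
      show (evalRingHom t) (Matrix.det _) = _
      rw [RingHom.map_det, RingHom.mapMatrix_apply]
    have h2 : (((X : K[X]) • A.map C + B.map C).map (evalRingHom t)) = t • A + B := by
      ext i j
      simp [Matrix.map_apply, Matrix.add_apply, Matrix.smul_apply]
      ring
    rw [h1, h2]
    have h3 : t • A + B = Algebra.leftMulMatrix b (u + t • w) := by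
      rw [map_add, map_smul]
      exact (add_comm _ _)
    rw [h3, ← Algebra.norm_eq_matrix_det]
  · simpa using natDegree_det_X_add_C_le A B
  · intro hw
    have hA : A = 0 := by simp [A, hw]
    rw [hA]
    simp only [Matrix.map_zero _ (map_zero C), smul_zero, zero_add]
    have : Matrix.det (B.map C) = C (Matrix.det B) := by
      rw [← RingHom.mapMatrix_apply, ← RingHom.map_det]
    rw [this, natDegree_C]
  · intro hw
    have h := coeff_det_X_add_C_card A B
    rw [Fintype.card_fin] at h
    rw [h, ← Algebra.norm_eq_matrix_det b w]
    exact (Algebra.norm_ne_zero_iff).mpr hw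


def ExtF (K : Type) [Field K] [Fintype K] (k : ℕ) : Type :=
  SplittingField (X ^ (Fintype.card K ^ k) - X : K[X])

instance (K : Type) [Field K] [Fintype K] (k : ℕ) : Field (ExtF K k) :=
  inferInstanceAs (Field (SplittingField _))
instance (K : Type) [Field K] [Fintype K] (k : ℕ) : Algebra K (ExtF K k) :=
  inferInstanceAs (Algebra K (SplittingField _))
instance (K : Type) [Field K] [Fintype K] (k : ℕ) :
    IsSplittingField K (ExtF K k) (X ^ (Fintype.card K ^ k) - X) :=
  inferInstanceAs (IsSplittingField K (SplittingField _) _)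
instance (K : Type) [Field K] [Fintype K] (k : ℕ) : FiniteDimensional K (ExtF K k) :=
  inferInstanceAs (FiniteDimensional K (SplittingField _))

theorem finrank_ExtF (K : Type) [Field K] [Fintype K] (k : ℕ) (hk : k ≠ 0) :
    finrank K (ExtF K k) = k := by
  classical
  set q := Fintype.card K with hq
  have hq1 : 1 < q := Fintype.one_lt_card
  set L := ExtF K k
  set g : K[X] := X ^ (q ^ k) - X with hg
  have hgne : g ≠ 0 := FiniteField.X_pow_card_pow_sub_X_ne_zero K hk hq1
  -- characteristic
  set p := ringChar K with hp
  haveI : CharP K p := ringChar.charP K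
  obtain ⟨e, hpp, hcard⟩ := FiniteField.card K p
  haveI : Fact p.Prime := ⟨hpp⟩
  haveI : CharP L p := (Algebra.charP_iff K L p).mp ‹CharP K p›
  haveI : ExpChar L p := ExpChar.prime hpp
  -- separability and splitting
  have hsep : g.Separable := by
    refine galois_poly_separable p (q ^ k) ?_
    have hpq : p ∣ q := by rw [hq, hcard]; exact dvd_pow_self p e.2.ne'
    exact dvd_trans hpq (dvd_pow_self q hk)
  have hsplit : Splits (g.map (algebraMap K L)) := SplittingField.splits g
  have hdeg : g.natDegree = q ^ k :=
    FiniteField.X_pow_card_pow_sub_X_natDegree_eq K hk hq1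
  have hcardroot : Fintype.card (g.rootSet L) = q ^ k := by
    rw [card_rootSet_eq_natDegree hsep hsplit, hdeg]
  -- the roots form a subalgebra
  have hmem : ∀ x : L, x ∈ g.rootSet L ↔ x ^ q ^ k = x := by
    intro x
    rw [mem_rootSet_of_ne hgne]
    simp only [hg, map_sub, map_pow, aeval_X, sub_eq_zero]
  let φ : L →+* L := iterateFrobenius L p (e * k)
  have hφ : ∀ x : L, φ x = x ^ q ^ k := by
    intro x
    rw [iterateFrobenius_def, pow_mul, ← hcard]
  let T : Subalgebra K L :=
    { (RingHom.eqLocus φ (RingHom.id L)).toSubsemiring with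
      algebraMap_mem' := fun t => by
        show φ (algebraMap K L t) = algebraMap K L t
        rw [hφ, ← map_pow, FiniteField.pow_card_pow] }
  have hTmem : ∀ x : L, x ∈ T ↔ x ^ q ^ k = x := by
    intro x
    show φ x = x ↔ _
    rw [hφ]
  have huniv : g.rootSet L = Set.univ := by
    rw [Set.eq_univ_iff_forall]
    intro x
    have htop : Algebra.adjoin K (g.rootSet L) = ⊤ := IsSplittingField.adjoin_rootSet L g
    have hle : Algebra.adjoin K (g.rootSet L) ≤ T := by
      rw [Algebra.adjoin_le_iff]
      intro y hy
      exact (hTmem y).mpr ((hmem y).mp hy)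
    have : x ∈ T := hle (htop ▸ Algebra.mem_top)
    exact (hmem x).mpr ((hTmem x).mp this)
  -- cardinality
  haveI : Finite L := Module.finite_of_finite K
  haveI : Fintype L := Fintype.ofFinite L
  have hcardL : Fintype.card L = q ^ k := by
    rw [← hcardroot]
    exact (Fintype.card_congr ((Equiv.setCongr huniv).trans (Equiv.Set.univ L))).symm
  have : Fintype.card L = q ^ finrank K L := card_eq_pow_finrank
  rw [hcardL] at this
  exact (Nat.pow_right_injective hq1 this.symm)


theorem key_nonconst (K : Type) [Field K] [Fintype K] (r : ℕ) (hr : r < Fintype.card K)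
    (L : Fin r → Type) [∀ k, Field (L k)] [∀ k, Algebra K (L k)]
    [∀ k, FiniteDimensional K (L k)]
    (hrank : ∀ k : Fin r, finrank K (L k) = (k : ℕ) + 1)
    (U W : ∀ k, L k) (hW : W ≠ 0)
    (hf : ∀ (k : Fin r) (u w : L k),
      ∃ f : K[X], (∀ t : K, f.eval t = Algebra.norm K (u + t • w)) ∧
        f.natDegree ≤ finrank K (L k) ∧
        (w = 0 → f.natDegree = 0) ∧
        (w ≠ 0 → f.coeff (finrank K (L k)) ≠ 0)) :
    ∃ t₁ t₂ : K, (∑ k, Algebra.norm K (U k + t₁ • W k)) ≠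
      (∑ k, Algebra.norm K (U k + t₂ • W k)) := by
  classical
  choose f heval hdegle hdeg0 hcoeff using fun k : Fin r => hf k (U k) (W k)
  set F : K[X] := ∑ k, f k with hF
  have hevalF : ∀ t : K, F.eval t = ∑ k, Algebra.norm K (U k + t • W k) := by
    intro t
    rw [hF, eval_finset_sum]
    exact Finset.sum_congr rfl fun k _ => heval k t
  -- the leading block
  have hWex : ∃ k, W k ≠ 0 := by
    by_contra h
    push_neg at h
    exact hW (funext fun k => h k)
  set S : Finset (Fin r) := Finset.univ.filter (fun k => W k ≠ 0) with hS
  have hSne : S.Nonempty := by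
    obtain ⟨k, hk⟩ := hWex
    exact ⟨k, by simp [hS, hk]⟩
  set k₀ : Fin r := S.max' hSne with hk₀
  have hWk₀ : W k₀ ≠ 0 := by
    have := S.max'_mem hSne
    simpa [hS] using this
  set d : ℕ := (k₀ : ℕ) + 1 with hd
  have hcoeffF : F.coeff d ≠ 0 := by
    rw [hF, finset_sum_coeff]
    rw [Finset.sum_eq_single k₀]
    · rw [← hrank k₀] at hd
      rw [hd]
      exact hcoeff k₀ hWk₀
    · intro k _ hkne
      by_cases hWk : W k = 0
      · exact coeff_eq_zero_of_natDegree_lt (by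
          rw [hdeg0 k hWk]; omega)
      · have hkS : k ∈ S := by simp [hS, hWk]
        have hkle : k ≤ k₀ := S.le_max' k hkS
        have hklt : (k : ℕ) < (k₀ : ℕ) := by
          rcases lt_or_eq_of_le hkle with h | h
          · exact h
          · exact absurd h hkne
        refine coeff_eq_zero_of_natDegree_lt ?_
        calc (f k).natDegree ≤ finrank K (L k) := hdegle k
          _ = (k : ℕ) + 1 := hrank k
          _ < d := by omega
    · intro h
      exact absurd (Finset.mem_univ k₀) h
  have hdegF : F.natDegree ≤ r := by
    refine natDegree_sum_le_of_forall_le _ _ fun k _ => ?_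
    calc (f k).natDegree ≤ finrank K (L k) := hdegle k
      _ = (k : ℕ) + 1 := hrank k
      _ ≤ r := k.2
  -- conclude
  by_contra hcon
  push_neg at hcon
  have hconst : ∀ t : K, F.eval t = F.eval 0 := by
    intro t
    rw [hevalF, hevalF]
    exact hcon t 0
  set G : K[X] := F - C (F.eval 0) with hG
  have hGzero : G = 0 := by
    refine eq_zero_of_natDegree_lt_card_of_eval_eq_zero' G Finset.univ
      (fun t _ => by simp [hG, hconst t]) ?_
    have h1 : G.natDegree ≤ r := by
      calc G.natDegree ≤ max F.natDegree (C (F.eval 0)).natDegree := natDegree_sub_le _ _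
        _ ≤ r := by simp [natDegree_C]; exact hdegF
    calc G.natDegree ≤ r := h1
      _ < Fintype.card K := hr
      _ = Finset.univ.card := Finset.card_univ.symm
  have h2 : G.coeff d = F.coeff d := by
    rw [hG, coeff_sub, coeff_C]
    simp [hd]
  exact hcoeffF (by rw [← h2, hGzero, coeff_zero])

/-- Let `q ≥ 3` be a prime power and `n = q(q-1)/2`. Then the
points of `PG(n,q)` (the projectivization of `F_q^{n+1}`) can be colored with
`q` colors so that no projective line is monochromatic; i.e. `χ_q(n+1) ≤ q`. -/
theorem stmt9 (q n : ℕ) (hq : IsPrimePow q) (hq3 : 3 ≤ q) (hn : n = q * (q - 1) / 2)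
    (K : Type) [Field K] [Fintype K] (hK : Fintype.card K = q) :
    ∃ C : Projectivization K (Fin (n + 1) → K) → Fin q,
      ∀ W : Submodule K (Fin (n + 1) → K), Module.finrank K W = 2 →
        ∃ p₁ p₂ : Projectivization K (Fin (n + 1) → K),
          p₁.submodule ≤ W ∧ p₂.submodule ≤ W ∧ C p₁ ≠ C p₂ := by
  classical
  set r : ℕ := q - 1 with hr
  -- the family of field extensions
  set L : Fin r → Type := fun k => ExtF K ((k : ℕ) + 1) with hL
  have hrank : ∀ k : Fin r, finrank K (L k) = (k : ℕ) + 1 := fun k =>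
    finrank_ExtF K _ (Nat.succ_ne_zero _)
  -- dimensions
  have hfinV : finrank K (∀ k, L k) = n := by
    rw [finrank_pi_fintype]
    have h1 : ∑ k : Fin r, finrank K (L k) = ∑ k : Fin r, ((k : ℕ) + 1) :=
      Finset.sum_congr rfl fun k _ => hrank k
    rw [h1, Fin.sum_univ_eq_sum_range (fun i => i + 1) r]
    have h2 : ∑ i ∈ Finset.range (r + 1), i = ∑ i ∈ Finset.range r, (i + 1) := by
      rw [Finset.sum_range_succ' (fun i => i) r]
      simp
    rw [← h2, Finset.sum_range_id]
    have hq1 : r + 1 = q := by omega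
    rw [hq1, hn]
  have hfinKn : finrank K (Fin n → K) = n := Module.finrank_fin_fun K
  obtain ⟨e⟩ := FiniteDimensional.nonempty_linearEquiv_of_finrank_eq
    (hfinKn.trans hfinV.symm)
  -- the coloring polynomial map
  set P : (Fin n → K) → K := fun x => ∑ k, Algebra.norm K (e x k) with hP
  have keyP : ∀ u w : Fin n → K, w ≠ 0 →
      ∃ t₁ t₂ : K, P (u + t₁ • w) ≠ P (u + t₂ • w) := by
    intro u w hw
    have hW : e w ≠ 0 := by
      simpa using hw
    have hrq : r < Fintype.card K := by rw [hK]; omega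
    obtain ⟨t₁, t₂, h⟩ := key_nonconst K r hrq L hrank (e u) (e w) hW
      (fun k u w => exists_norm_poly _ u w)
    refine ⟨t₁, t₂, ?_⟩
    have he : ∀ t : K, P (u + t • w) = ∑ k, Algebra.norm K (e u k + t • e w k) := by
      intro t
      rw [hP]
      have : e (u + t • w) = e u + t • e w := by rw [map_add, map_smul]
      simp only [this, Pi.add_apply, Pi.smul_apply]
    rw [he t₁, he t₂]
    exact h
  -- the index of the first nonzero coordinate
  set idx : (Fin (n + 1) → K) → Fin (n + 1) := fun v =>
    if h : (Finset.univ.filter fun i => v i ≠ 0).Nonempty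
      then (Finset.univ.filter fun i => v i ≠ 0).min' h else 0 with hidx
  -- the color of a vector
  set c : (Fin (n + 1) → K) → K := fun v =>
    P (fun j => (v (idx v))⁻¹ * v (Fin.succ j)) with hc
  have hidx_smul : ∀ (a : K), a ≠ 0 → ∀ v, idx (a • v) = idx v := by
    intro a ha v
    have hfil : (Finset.univ.filter fun i => (a • v) i ≠ 0)
        = (Finset.univ.filter fun i => v i ≠ 0) := by
      ext i
      simp [Pi.smul_apply, smul_eq_mul, ha]
    rw [hidx]
    simp only [hfil]
  have hc_smul : ∀ (a : K), a ≠ 0 → ∀ v, c (a • v) = c v := by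
    intro a ha v
    rw [hc]
    simp only
    rw [hidx_smul a ha v]
    congr 1
    funext j
    simp only [Pi.smul_apply, smul_eq_mul, mul_inv]
    rw [mul_comm a⁻¹ (v (idx v))⁻¹, mul_assoc, ← mul_assoc a⁻¹, inv_mul_cancel₀ ha, one_mul]
  set eqvK : K ≃ Fin q := Fintype.equivFinOfCardEq hK with heqvK
  refine ⟨fun p => eqvK (c p.rep), ?_⟩
  intro W hW2
  have hCmk : ∀ (v : Fin (n + 1) → K) (hv : v ≠ 0),
      (fun p : Projectivization K (Fin (n + 1) → K) => eqvK (c p.rep)) (mk K v hv)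
        = eqvK (c v) := by
    intro v hv
    obtain ⟨a, ha⟩ := (mk_eq_mk_iff K _ _ (rep_nonzero _) hv).mp (mk_rep (mk K v hv))
    simp only
    rw [← ha, Units.smul_def, hc_smul (a : K) a.ne_zero v]
  -- find the minimal support index of W
  have hWbot : W ≠ ⊥ := by
    intro h
    rw [h, finrank_bot] at hW2
    omega
  obtain ⟨v₀, hv₀W, hv₀⟩ := Submodule.exists_mem_ne_zero_of_ne_bot hWbot
  set S : Finset (Fin (n + 1)) := Finset.univ.filter fun i => ∃ v ∈ W, v i ≠ 0 with hS
  have hSne : S.Nonempty := by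
    obtain ⟨i, hi⟩ := Function.ne_iff.mp hv₀
    refine ⟨i, ?_⟩
    simp only [hS, Finset.mem_filter, Finset.mem_univ, true_and]
    exact ⟨v₀, hv₀W, hi⟩
  set i₀ : Fin (n + 1) := S.min' hSne with hi₀
  have hlow : ∀ v ∈ W, ∀ j : Fin (n + 1), j < i₀ → v j = 0 := by
    intro v hv j hj
    by_contra hvj
    have hjS : j ∈ S := by
      simp only [hS, Finset.mem_filter, Finset.mem_univ, true_and]
      exact ⟨v, hv, hvj⟩
    exact absurd (S.min'_le j hjS) (not_le.mpr hj)
  have hi₀S : i₀ ∈ S := S.min'_mem hSne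
  obtain ⟨u', hu'W, hu'⟩ : ∃ v ∈ W, v i₀ ≠ 0 := by
    simpa only [hS, Finset.mem_filter, Finset.mem_univ, true_and] using hi₀S
  -- normalize u
  set u : Fin (n + 1) → K := (u' i₀)⁻¹ • u' with hu
  have huW : u ∈ W := W.smul_mem _ hu'W
  have hui₀ : u i₀ = 1 := by
    rw [hu]
    simp [inv_mul_cancel₀ hu']
  have hune : u ≠ 0 := fun h => by
    rw [h] at hui₀
    simp at hui₀
  -- find w
  have hspan : Submodule.span K {u} < W := by
    refine lt_of_le_of_ne ((Submodule.span_singleton_le_iff_mem u W).mpr huW) ?_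
    intro h
    have := finrank_span_singleton (K := K) hune
    rw [h, hW2] at this
    omega
  obtain ⟨w', hw'W, hw'span⟩ := SetLike.exists_of_lt hspan
  set w : Fin (n + 1) → K := w' - (w' i₀) • u with hw
  have hwW : w ∈ W := W.sub_mem hw'W (W.smul_mem _ huW)
  have hwi₀ : w i₀ = 0 := by
    rw [hw]
    simp [hui₀]
  have hwne : w ≠ 0 := by
    intro h
    apply hw'span
    rw [Submodule.mem_span_singleton]
    exact ⟨w' i₀, (sub_eq_zero.mp (hw ▸ h : w' - (w' i₀) • u = 0)).symm⟩
  -- the tail of w is nonzero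
  set tl : (Fin (n + 1) → K) → (Fin n → K) := fun v j => v (Fin.succ j) with htl
  have htlw : tl w ≠ 0 := by
    obtain ⟨j, hj⟩ := Function.ne_iff.mp hwne
    have hj0 : j ≠ 0 := by
      intro h0
      rcases eq_or_ne i₀ 0 with hi | hi
      · exact hj (by rw [h0, ← hi]; exact hwi₀)
      · refine hj (hlow w hwW j ?_)
        rw [h0]
        exact Fin.pos_iff_ne_zero.mpr hi
    obtain ⟨j', hj'⟩ := Fin.exists_succ_eq_of_ne_zero hj0
    intro h
    apply hj
    have h2 := congrFun h j'
    rw [htl] at h2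
    simp only [Pi.zero_apply] at h2
    rw [← hj']
    exact h2
  obtain ⟨t₁, t₂, hP12⟩ := keyP (tl u) (tl w) htlw
  have hmem : ∀ t : K, u + t • w ∈ W := fun t => W.add_mem huW (W.smul_mem _ hwW)
  have hvi₀ : ∀ t : K, (u + t • w) i₀ = 1 := by
    intro t
    simp [Pi.add_apply, Pi.smul_apply, hui₀, hwi₀]
  have hvne : ∀ t : K, u + t • w ≠ 0 := by
    intro t h
    have h2 := congrFun h i₀
    rw [hvi₀ t] at h2
    simp at h2
  have hvidx : ∀ t : K, idx (u + t • w) = i₀ := by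
    intro t
    have hne : (Finset.univ.filter fun i => (u + t • w) i ≠ 0).Nonempty := by
      refine ⟨i₀, ?_⟩
      simp only [Finset.mem_filter, Finset.mem_univ, true_and, hvi₀ t]
      exact one_ne_zero
    rw [hidx]
    simp only [hne, dif_pos]
    refine le_antisymm (Finset.min'_le _ _ ?_) (Finset.le_min' _ _ _ ?_)
    · simp only [Finset.mem_filter, Finset.mem_univ, true_and, hvi₀ t]
      exact one_ne_zero
    · intro j hjmem
      simp only [Finset.mem_filter, Finset.mem_univ, true_and] at hjmem
      by_contra hcon
      exact hjmem (hlow _ (hmem t) j (not_le.mp hcon))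
  have hcv : ∀ t : K, c (u + t • w) = P (tl u + t • tl w) := by
    intro t
    rw [hc]
    simp only
    rw [hvidx t]
    congr 1
    funext j
    rw [hvi₀ t, inv_one, one_mul]
    simp [htl, Pi.add_apply, Pi.smul_apply]
  refine ⟨mk K (u + t₁ • w) (hvne t₁), mk K (u + t₂ • w) (hvne t₂), ?_, ?_, ?_⟩
  · rw [submodule_mk]
    exact (Submodule.span_singleton_le_iff_mem _ _).mpr (hmem t₁)
  · rw [submodule_mk]
    exact (Submodule.span_singleton_le_iff_mem _ _).mpr (hmem t₂)
  · rw [hCmk _ (hvne t₁), hCmk _ (hvne t₂)]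
    intro h
    apply hP12
    have h3 := eqvK.injective h
    rw [hcv t₁, hcv t₂] at h3
    exact h3
end
end

section
/- Let G be a bipartite graph with parts M and N where every vertex of M has degree at least d ≥ 2. If G is C_4-free and θ_{3,t}-free (between any two vertices there are at most t-1 internally disjoint paths of length 3), then the number of edges of G satisfies |E| ≤ (t-1)·|N|²/(d² - d) + |N|. -/
/-- `G` contains no 4-cycle `C₄`. -/
def C4Free {V : Type*} (G : SimpleGraph V) : Prop :=
  ¬∃ a b c d : V, a ≠ b ∧ a ≠ c ∧ a ≠ d ∧ b ≠ c ∧ b ≠ d ∧ c ≠ d ∧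
    G.Adj a b ∧ G.Adj b c ∧ G.Adj c d ∧ G.Adj d a

/-- `G` contains no `θ_{3,t}`: no two vertices joined by `t` internally
vertex-disjoint paths of length 3. -/
def Theta3Free {V : Type*} (G : SimpleGraph V) (t : ℕ) : Prop :=
  ¬∃ (u v : V) (x y : Fin t → V), u ≠ v ∧
    Function.Injective x ∧ Function.Injective y ∧
    (∀ i j : Fin t, x i ≠ y j) ∧
    (∀ i : Fin t, x i ≠ u ∧ x i ≠ v ∧ y i ≠ u ∧ y i ≠ v) ∧
    (∀ i : Fin t, G.Adj u (x i) ∧ G.Adj (x i) (y i) ∧ G.Adj (y i) v)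


private lemma stmt14_aux (e nn L S mm T D : ℝ)
    (hT1 : (1:ℝ) ≤ T) (hD2 : (2:ℝ) ≤ D)
    (hnn0 : 0 ≤ nn) (hL0 : 0 ≤ L) (hmm0 : 0 ≤ mm) (he0 : 0 ≤ e)
    (c1 : (D - 1) * L ≤ (T - 1) * (mm * nn))
    (c2 : D * mm ≤ e)
    (c3 : e ^ 2 ≤ nn * S)
    (c4 : S = L + e) :
    e ≤ (T - 1) * nn ^ 2 / (D ^ 2 - D) + nn := by
  have hdd : (0 : ℝ) < D ^ 2 - D := by nlinarith
  rw [div_add' _ _ _ (ne_of_gt hdd), le_div_iff₀ hdd]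
  have k1 : (D - 1) * D * L ≤ (T - 1) * e * nn := by
    nlinarith [mul_le_mul_of_nonneg_left c2 (mul_nonneg (by linarith : (0:ℝ) ≤ T - 1) hnn0),
      mul_le_mul_of_nonneg_right c1 (by linarith : (0:ℝ) ≤ D)]
  have k2 : (D - 1) * D * (e ^ 2 - e * nn) ≤ (T - 1) * e * nn * nn := by
    have hLn : e ^ 2 - e * nn ≤ nn * L := by nlinarith [c3, c4]
    nlinarith [mul_le_mul_of_nonneg_right k1 hnn0,
      mul_le_mul_of_nonneg_left hLn (by nlinarith : (0:ℝ) ≤ (D - 1) * D)]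
  rcases eq_or_lt_of_le he0 with h0 | h0
  · rw [← h0]
    nlinarith [sq_nonneg nn]
  · nlinarith [k2, h0, mul_pos h0 h0]

/-- Let `G` be a bipartite graph with parts `M`, `N` in which
every vertex of `M` has degree at least `d ≥ 2`. If `G` is `C₄`-free and
`θ_{3,t}`-free, then `|E(G)| ≤ (t-1)·|N|²/(d² - d) + |N|`. -/
theorem stmt14 (M N : Type) [Fintype M] [Fintype N] [DecidableEq M] [DecidableEq N]
    (G : SimpleGraph (M ⊕ N)) [DecidableRel G.Adj]
    (hbipM : ∀ a b : M, ¬G.Adj (Sum.inl a) (Sum.inl b))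
    (hbipN : ∀ a b : N, ¬G.Adj (Sum.inr a) (Sum.inr b))
    (t d : ℕ) (ht : 2 ≤ t) (hd : 2 ≤ d)
    (hdeg : ∀ a : M, d ≤ G.degree (Sum.inl a))
    (hC4 : C4Free G) (hθ : Theta3Free G t) :
    (G.edgeFinset.card : ℝ) ≤
      ((t : ℝ) - 1) * (Fintype.card N : ℝ) ^ 2 / ((d : ℝ) ^ 2 - d) +
        (Fintype.card N : ℝ) := by
  classical
  set A : N → Finset M := fun y => Finset.univ.filter fun m => G.Adj (Sum.inl m) (Sum.inr y)
    with hAdef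
  set B : M → Finset N := fun m => Finset.univ.filter fun y => G.Adj (Sum.inl m) (Sum.inr y)
    with hBdef
  have hAmem : ∀ (y : N) (m : M), m ∈ A y ↔ G.Adj (Sum.inl m) (Sum.inr y) := by
    intro y m; simp [hAdef]
  have hBmem : ∀ (m : M) (y : N), y ∈ B m ↔ G.Adj (Sum.inl m) (Sum.inr y) := by
    intro m y; simp [hBdef]
  have hAcard : ∀ y : N, (A y).card = G.degree (Sum.inr y) := by
    intro y
    rw [← SimpleGraph.card_neighborFinset_eq_degree]
    apply Finset.card_bij (fun m _ => (Sum.inl m : M ⊕ N))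
    · intro m hm
      rw [SimpleGraph.mem_neighborFinset]
      exact ((hAmem y m).mp hm).symm
    · intro a _ b _ h
      exact Sum.inl_injective h
    · intro v hv
      rw [SimpleGraph.mem_neighborFinset] at hv
      match v with
      | Sum.inl m => exact ⟨m, (hAmem y m).mpr hv.symm, rfl⟩
      | Sum.inr y' => exact absurd hv (hbipN y y')
  have hBcard : ∀ m : M, (B m).card = G.degree (Sum.inl m) := by
    intro m
    rw [← SimpleGraph.card_neighborFinset_eq_degree]
    apply Finset.card_bij (fun y _ => (Sum.inr y : M ⊕ N))
    · intro y hy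
      rw [SimpleGraph.mem_neighborFinset]
      exact (hBmem m y).mp hy
    · intro a _ b _ h
      exact Sum.inr_injective h
    · intro v hv
      rw [SimpleGraph.mem_neighborFinset] at hv
      match v with
      | Sum.inl m' => exact absurd hv (hbipM m m')
      | Sum.inr y => exact ⟨y, (hBmem m y).mpr hv, rfl⟩
  have hBd : ∀ m : M, d ≤ (B m).card := fun m => (hBcard m) ▸ hdeg m
  -- edges as pairs
  set AP : Finset (M × N) := Finset.univ.filter fun q => G.Adj (Sum.inl q.1) (Sum.inr q.2)
    with hAPdef
  have hAPmem : ∀ q : M × N, q ∈ AP ↔ G.Adj (Sum.inl q.1) (Sum.inr q.2) := by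
    intro q; simp [hAPdef]
  have hAPedge : AP.card = G.edgeFinset.card := by
    apply Finset.card_bij (fun q _ => (s(Sum.inl q.1, Sum.inr q.2) : Sym2 (M ⊕ N)))
    · intro q hq
      rw [SimpleGraph.mem_edgeFinset, SimpleGraph.mem_edgeSet]
      exact (hAPmem q).mp hq
    · intro a _ b _ h
      rw [Sym2.eq_iff] at h
      rcases h with ⟨h1, h2⟩ | ⟨h1, h2⟩
      · exact Prod.ext (Sum.inl_injective h1) (Sum.inr_injective h2)
      · exact absurd h1 (by simp)
    · intro e he
      induction e using Sym2.ind with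
      | _ a b =>
        rw [SimpleGraph.mem_edgeFinset, SimpleGraph.mem_edgeSet] at he
        match a, b with
        | Sum.inl m, Sum.inl m' => exact absurd he (hbipM m m')
        | Sum.inr y, Sum.inr y' => exact absurd he (hbipN y y')
        | Sum.inl m, Sum.inr y => exact ⟨(m, y), (hAPmem (m, y)).mpr he, rfl⟩
        | Sum.inr y, Sum.inl m => exact ⟨(m, y), (hAPmem (m, y)).mpr he.symm, Sym2.eq_swap⟩
  have hAPN : AP.card = ∑ y : N, (A y).card := by
    rw [Finset.card_eq_sum_card_fiberwise
      (f := fun q : M × N => q.2) (t := Finset.univ) (fun _ _ => Finset.mem_univ _)]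
    refine Finset.sum_congr rfl fun y _ => ?_
    apply Finset.card_bij (fun q _ => q.1)
    · intro q hq
      rw [Finset.mem_filter] at hq
      exact (hAmem y q.1).mpr (hq.2 ▸ (hAPmem q).mp hq.1)
    · intro q hq q' hq' h
      rw [Finset.mem_filter] at hq hq'
      exact Prod.ext h (hq.2.trans hq'.2.symm)
    · intro m hm
      exact ⟨(m, y), Finset.mem_filter.mpr ⟨(hAPmem (m, y)).mpr ((hAmem y m).mp hm), rfl⟩, rfl⟩
  have hAPM : AP.card = ∑ m : M, (B m).card := by
    rw [Finset.card_eq_sum_card_fiberwise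
      (f := fun q : M × N => q.1) (t := Finset.univ) (fun _ _ => Finset.mem_univ _)]
    refine Finset.sum_congr rfl fun m _ => ?_
    apply Finset.card_bij (fun q _ => q.2)
    · intro q hq
      rw [Finset.mem_filter] at hq
      exact (hBmem m q.2).mpr (hq.2 ▸ (hAPmem q).mp hq.1)
    · intro q hq q' hq' h
      rw [Finset.mem_filter] at hq hq'
      exact Prod.ext (hq.2.trans hq'.2.symm) h
    · intro y hy
      exact ⟨(m, y), Finset.mem_filter.mpr ⟨(hAPmem (m, y)).mpr ((hBmem m y).mp hy), rfl⟩, rfl⟩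
  have hMle : d * Fintype.card M ≤ AP.card := by
    rw [hAPM]
    calc d * Fintype.card M = ∑ _m : M, d := by
          rw [Finset.sum_const, Finset.card_univ, smul_eq_mul, mul_comm]
      _ ≤ ∑ m : M, (B m).card := Finset.sum_le_sum fun m _ => hBd m
  -- the quadruple (path) set
  set Q : Finset (M × N × M × N) := Finset.univ.filter (fun p =>
      G.Adj (Sum.inl p.1) (Sum.inr p.2.1) ∧ G.Adj (Sum.inl p.2.2.1) (Sum.inr p.2.1) ∧
      G.Adj (Sum.inl p.2.2.1) (Sum.inr p.2.2.2) ∧ p.1 ≠ p.2.2.1 ∧ p.2.1 ≠ p.2.2.2)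
    with hQdef
  have hQmem : ∀ p : M × N × M × N, p ∈ Q ↔
      (G.Adj (Sum.inl p.1) (Sum.inr p.2.1) ∧ G.Adj (Sum.inl p.2.2.1) (Sum.inr p.2.1) ∧
      G.Adj (Sum.inl p.2.2.1) (Sum.inr p.2.2.2) ∧ p.1 ≠ p.2.2.1 ∧ p.2.1 ≠ p.2.2.2) := by
    intro p; simp [hQdef]
  -- lower bound for |Q|
  have hQlow : ∑ y : N, (A y).card * (((A y).card - 1) * (d - 1)) ≤ Q.card := by
    rw [Finset.card_eq_sum_card_fiberwise
      (f := fun p : M × N × M × N => (p.2.1, p.2.2.1)) (t := Finset.univ)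
      (fun _ _ => Finset.mem_univ _)]
    rw [← Finset.univ_product_univ, Finset.sum_product]
    refine Finset.sum_le_sum fun y _ => ?_
    have hstep : ∀ m ∈ A y, ((A y).card - 1) * (d - 1) ≤
        (Q.filter fun p => (p.2.1, p.2.2.1) = (y, m)).card := by
      intro m hm
      have h1 : ((A y).erase m).card = (A y).card - 1 := Finset.card_erase_of_mem hm
      have h2 : d - 1 ≤ ((B m).erase y).card := by
        have := Finset.pred_card_le_card_erase (s := B m) (a := y)
        have := hBd m
        omega
      have hinj : (((A y).erase m) ×ˢ ((B m).erase y)).card ≤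
          (Q.filter fun p => (p.2.1, p.2.2.1) = (y, m)).card := by
        apply Finset.card_le_card_of_injOn (fun r => (r.1, y, m, r.2))
        · intro r hr
          rw [Finset.mem_coe, Finset.mem_product] at hr
          obtain ⟨hr1, hr2⟩ := hr
          rw [Finset.mem_coe, Finset.mem_filter]
          refine ⟨(hQmem _).mpr ⟨?_, ?_, ?_, ?_, ?_⟩, rfl⟩
          · exact (hAmem y r.1).mp (Finset.mem_of_mem_erase hr1)
          · exact (hAmem y m).mp hm
          · exact (hBmem m r.2).mp (Finset.mem_of_mem_erase hr2)
          · exact Finset.ne_of_mem_erase hr1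
          · exact (Finset.ne_of_mem_erase hr2).symm
        · intro r _ r' _ h
          simp only [Prod.mk.injEq] at h
          exact Prod.ext h.1 h.2.2.2
      calc ((A y).card - 1) * (d - 1) ≤ ((A y).erase m).card * ((B m).erase y).card := by
            rw [h1]; exact Nat.mul_le_mul_left _ h2
        _ = (((A y).erase m) ×ˢ ((B m).erase y)).card := (Finset.card_product _ _).symm
        _ ≤ _ := hinj
    calc (A y).card * (((A y).card - 1) * (d - 1))
        = ∑ _m ∈ A y, ((A y).card - 1) * (d - 1) := by rw [Finset.sum_const, smul_eq_mul]
      _ ≤ ∑ m ∈ A y, (Q.filter fun p => (p.2.1, p.2.2.1) = (y, m)).card :=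
          Finset.sum_le_sum hstep
      _ ≤ ∑ m : M, (Q.filter fun p => (p.2.1, p.2.2.1) = (y, m)).card :=
          Finset.sum_le_sum_of_subset (Finset.subset_univ _)
  -- four vertices spanning a C4 give a contradiction
  have hquad : ∀ (a b : M) (c e : N), a ≠ b → c ≠ e →
      G.Adj (Sum.inl a) (Sum.inr c) → G.Adj (Sum.inl a) (Sum.inr e) →
      G.Adj (Sum.inl b) (Sum.inr c) → G.Adj (Sum.inl b) (Sum.inr e) → False := by
    intro a b c e hab hce h1 h2 h3 h4
    exact hC4 ⟨Sum.inl a, Sum.inr c, Sum.inl b, Sum.inr e,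
      by simp, by simp [hab], by simp, by simp, by simp [hce], by simp,
      h1, h3.symm, h4, h2.symm⟩
  -- upper bound on fibers from θ-freeness
  have hfiber2 : ∀ q : M × N, (Q.filter fun p => (p.1, p.2.2.2) = q).card ≤ t - 1 := by
    rintro ⟨m₁, y'⟩
    by_contra hcon
    push_neg at hcon
    have hts : t ≤ (Q.filter fun p => (p.1, p.2.2.2) = (m₁, y')).card := by omega
    obtain ⟨s, hs_sub, hs_card⟩ := Finset.exists_subset_card_eq hts
    have hmem2 : ∀ p ∈ Q.filter (fun p => (p.1, p.2.2.2) = (m₁, y')),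
        G.Adj (Sum.inl m₁) (Sum.inr p.2.1) ∧ G.Adj (Sum.inl p.2.2.1) (Sum.inr p.2.1) ∧
        G.Adj (Sum.inl p.2.2.1) (Sum.inr y') ∧ m₁ ≠ p.2.2.1 ∧ p.2.1 ≠ y' := by
      intro p hp
      rw [Finset.mem_filter] at hp
      obtain ⟨hpQ, hpe⟩ := hp
      have h1 := (hQmem p).mp hpQ
      have e1 : p.1 = m₁ := congrArg Prod.fst hpe
      have e2 : p.2.2.2 = y' := congrArg Prod.snd hpe
      exact ⟨e1 ▸ h1.1, h1.2.1, e2 ▸ h1.2.2.1, e1 ▸ h1.2.2.2.1, e2 ▸ h1.2.2.2.2⟩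
    have hproj : ∀ p ∈ Q.filter (fun p => (p.1, p.2.2.2) = (m₁, y')), p.1 = m₁ ∧ p.2.2.2 = y' := by
      intro p hp
      rw [Finset.mem_filter] at hp
      exact ⟨congrArg Prod.fst hp.2, congrArg Prod.snd hp.2⟩
    have hkey : ∀ p ∈ Q.filter (fun p => (p.1, p.2.2.2) = (m₁, y')),
        ∀ p' ∈ Q.filter (fun p => (p.1, p.2.2.2) = (m₁, y')),
        (p.2.1 = p'.2.1 ∨ p.2.2.1 = p'.2.2.1) → p = p' := by
      intro p hp p' hp' hor
      obtain ⟨a1, a2, a3, a4, a5⟩ := hmem2 p hp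
      obtain ⟨b1, b2, b3, b4, b5⟩ := hmem2 p' hp'
      obtain ⟨e1, e4⟩ := hproj p hp
      obtain ⟨e1', e4'⟩ := hproj p' hp'
      have hy : p.2.1 = p'.2.1 ∧ p.2.2.1 = p'.2.2.1 := by
        rcases hor with h | h
        · refine ⟨h, ?_⟩
          by_contra hne
          exact hquad p.2.2.1 p'.2.2.1 p.2.1 y' hne a5 a2 a3 (by rw [h]; exact b2) b3
        · refine ⟨?_, h⟩
          by_contra hne
          exact hquad m₁ p.2.2.1 p.2.1 p'.2.1 a4 hne a1 b1 a2 (by rw [h]; exact b2)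
      exact Prod.ext (e1.trans e1'.symm) (Prod.ext hy.1 (Prod.ext hy.2 (e4.trans e4'.symm)))
    have hcardcoe : Fintype.card {x // x ∈ s} = t := by rw [Fintype.card_coe]; exact hs_card
    let eqv : {x // x ∈ s} ≃ Fin t := Fintype.equivFinOfCardEq hcardcoe
    let f : Fin t → M × N × M × N := fun i => ((eqv.symm i : {x // x ∈ s}) : M × N × M × N)
    have hf_mem : ∀ i, f i ∈ Q.filter (fun p => (p.1, p.2.2.2) = (m₁, y')) :=
      fun i => hs_sub (eqv.symm i).2
    have hf_inj : Function.Injective f := fun i j h => eqv.symm.injective (Subtype.ext h)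
    apply hθ
    refine ⟨Sum.inl m₁, Sum.inr y', fun i => Sum.inr ((f i).2.1), fun i => Sum.inl ((f i).2.2.1),
      by simp, ?_, ?_, ?_, ?_, ?_⟩
    · intro i j h
      have hh : (f i).2.1 = (f j).2.1 := Sum.inr_injective h
      exact hf_inj (hkey _ (hf_mem i) _ (hf_mem j) (Or.inl hh))
    · intro i j h
      have hh : (f i).2.2.1 = (f j).2.2.1 := Sum.inl_injective h
      exact hf_inj (hkey _ (hf_mem i) _ (hf_mem j) (Or.inr hh))
    · intro i j; simp
    · intro i
      obtain ⟨a1, a2, a3, a4, a5⟩ := hmem2 _ (hf_mem i)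
      refine ⟨by simp, ?_, ?_, by simp⟩
      · simp only [ne_eq, Sum.inr.injEq]; exact a5
      · simp only [ne_eq, Sum.inl.injEq]; exact Ne.symm a4
    · intro i
      obtain ⟨a1, a2, a3, _, _⟩ := hmem2 _ (hf_mem i)
      exact ⟨a1, a2.symm, a3⟩
  have hQup : Q.card ≤ (t - 1) * (Fintype.card M * Fintype.card N) := by
    rw [Finset.card_eq_sum_card_fiberwise
      (f := fun p : M × N × M × N => (p.1, p.2.2.2)) (t := Finset.univ)
      (fun _ _ => Finset.mem_univ _)]
    calc ∑ q ∈ Finset.univ, (Q.filter fun p => (p.1, p.2.2.2) = q).card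
        ≤ ∑ _q ∈ (Finset.univ : Finset (M × N)), (t - 1) :=
          Finset.sum_le_sum fun q _ => hfiber2 q
      _ = (t - 1) * (Fintype.card M * Fintype.card N) := by
          rw [Finset.sum_const, Finset.card_univ, Fintype.card_prod, smul_eq_mul, mul_comm]
  -- combine to the main counting inequality
  have hmain : (d - 1) * ∑ y : N, (A y).card * ((A y).card - 1)
      ≤ (t - 1) * (Fintype.card M * Fintype.card N) := by
    refine le_trans ?_ (hQlow.trans hQup)
    rw [Finset.mul_sum]
    apply le_of_eq
    refine Finset.sum_congr rfl fun y _ => ?_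
    ring
  -- Cauchy–Schwarz
  have hCS : (∑ y : N, (A y).card) ^ 2 ≤ Fintype.card N * ∑ y : N, (A y).card ^ 2 := by
    simpa using sq_sum_le_card_mul_sum_sq (s := (Finset.univ : Finset N))
      (f := fun y => (A y).card)
  have hsplit : ∀ k : ℕ, k * (k - 1) + k = k ^ 2 := by
    intro k
    cases k with
    | zero => rfl
    | succ n => simp [Nat.succ_sub_one]; ring
  have hsq : ∑ y : N, (A y).card ^ 2
      = (∑ y : N, (A y).card * ((A y).card - 1)) + ∑ y : N, (A y).card := by
    rw [← Finset.sum_add_distrib]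
    exact Finset.sum_congr rfl fun y _ => (hsplit _).symm
  have hEsum : (∑ y : N, (A y).card) = G.edgeFinset.card := hAPN.symm.trans hAPedge
  have hME : d * Fintype.card M ≤ G.edgeFinset.card := hAPedge ▸ hMle
  -- pass to the reals
  set e : ℝ := (G.edgeFinset.card : ℝ) with hedef
  set nn : ℝ := (Fintype.card N : ℝ) with hnndef
  set L : ℝ := ((∑ y : N, (A y).card * ((A y).card - 1) : ℕ) : ℝ) with hLdef
  set S : ℝ := ((∑ y : N, (A y).card ^ 2 : ℕ) : ℝ) with hSdef
  set mm : ℝ := (Fintype.card M : ℝ) with hmmdef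
  have hT1 : (1 : ℝ) ≤ (t : ℝ) := by exact_mod_cast Nat.one_le_of_lt ht
  have hD2 : (2 : ℝ) ≤ (d : ℝ) := by exact_mod_cast hd
  have hnn0 : (0 : ℝ) ≤ nn := by rw [hnndef]; exact Nat.cast_nonneg _
  have hL0 : (0 : ℝ) ≤ L := by rw [hLdef]; exact Nat.cast_nonneg _
  have hmm0 : (0 : ℝ) ≤ mm := by rw [hmmdef]; exact Nat.cast_nonneg _
  have he0 : (0 : ℝ) ≤ e := by rw [hedef]; exact Nat.cast_nonneg _
  have c1 : ((d : ℝ) - 1) * L ≤ ((t : ℝ) - 1) * (mm * nn) := by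
    have hc : (((d - 1) * ∑ y : N, (A y).card * ((A y).card - 1) : ℕ) : ℝ)
        ≤ (((t - 1) * (Fintype.card M * Fintype.card N) : ℕ) : ℝ) := by exact_mod_cast hmain
    rw [Nat.cast_mul, Nat.cast_mul, Nat.cast_mul, Nat.cast_sub (by omega : 1 ≤ d),
      Nat.cast_sub (by omega : 1 ≤ t), Nat.cast_one] at hc
    exact hc
  have c2 : (d : ℝ) * mm ≤ e := by
    rw [hedef, hmmdef]; exact_mod_cast hME
  have c3 : e ^ 2 ≤ nn * S := by
    rw [hedef, hnndef, hSdef, ← hEsum]; exact_mod_cast hCS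
  have c4 : S = L + e := by
    rw [hSdef, hLdef, hedef, ← hEsum]; exact_mod_cast congrArg (Nat.cast (R := ℝ)) hsq
  exact stmt14_aux e nn L S mm _ _ hT1 hD2 hnn0 hL0 hmm0 he0 c1 c2 c3 c4
end

section
/- Let B be an m × n matrix with nonnegative real entries and let σ(A) denote the sum of all entries of a matrix A. Then σ(B)³/(mn) ≤ σ(B Bᵀ B). -/
open Matrix

private lemma awm_key (m n : ℕ) (B : Matrix (Fin m) (Fin n) ℝ)
    (hB : ∀ i j, 0 ≤ B i j) :
    (∑ i, ∑ j, B i j) ^ 3 ≤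
      (m * n : ℝ) * ∑ i, ∑ j, B i j * ((∑ j', B i j') * (∑ i', B i' j)) := by
  set r : Fin m → ℝ := fun i => ∑ j, B i j with hrdef
  set c : Fin n → ℝ := fun j => ∑ i, B i j with hcdef
  have hr0 : ∀ i, 0 ≤ r i := fun i => Finset.sum_nonneg fun j _ => hB i j
  have hc0 : ∀ j, 0 ≤ c j := fun j => Finset.sum_nonneg fun i _ => hB i j
  set s : Finset (Fin m × Fin n) := Finset.univ.filter (fun p => 0 < B p.1 p.2) with hs
  have hmem : ∀ p ∈ s, 0 < B p.1 p.2 := fun p hp => (Finset.mem_filter.mp hp).2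
  have hrs : ∀ p ∈ s, 0 < r p.1 := fun p hp =>
    lt_of_lt_of_le (hmem p hp)
      (Finset.single_le_sum (fun j _ => hB p.1 j) (Finset.mem_univ p.2))
  have hcs : ∀ p ∈ s, 0 < c p.2 := fun p hp =>
    lt_of_lt_of_le (hmem p hp)
      (Finset.single_le_sum (fun i _ => hB i p.2) (Finset.mem_univ p.1))
  set w : Fin m × Fin n → ℝ :=
    fun p => Real.sqrt (B p.1 p.2 / r p.1) * Real.sqrt (B p.1 p.2 / c p.2) with hwdef
  set f : Fin m × Fin n → ℝ := fun p => Real.sqrt (r p.1 * c p.2) with hfdef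
  have hw0 : ∀ p, 0 ≤ w p := fun p => mul_nonneg (Real.sqrt_nonneg _) (Real.sqrt_nonneg _)
  have hf0 : ∀ p, 0 ≤ f p := fun p => Real.sqrt_nonneg _
  -- w * f = B on s
  have hwf : ∀ p ∈ s, w p * f p = B p.1 p.2 := by
    intro p hp
    have h1 := hrs p hp
    have h2 := hcs p hp
    have hb := hmem p hp
    have hrw : w p * f p =
        Real.sqrt ((B p.1 p.2 / r p.1) * (B p.1 p.2 / c p.2) * (r p.1 * c p.2)) := by
      rw [Real.sqrt_mul (mul_nonneg (div_nonneg hb.le h1.le) (div_nonneg hb.le h2.le)),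
        Real.sqrt_mul (div_nonneg hb.le h1.le)]
    rw [hrw]
    have heq : (B p.1 p.2 / r p.1) * (B p.1 p.2 / c p.2) * (r p.1 * c p.2)
        = B p.1 p.2 ^ 2 := by
      field_simp
    rw [heq, Real.sqrt_sq hb.le]
  -- w * f ^ 3 = B * (r * c) on s
  have hwf3 : ∀ p ∈ s, w p * f p ^ (3:ℝ) = B p.1 p.2 * (r p.1 * c p.2) := by
    intro p hp
    have h3 : f p ^ (3:ℝ) = f p * (f p * f p) := by
      rw [show (3:ℝ) = ((3:ℕ):ℝ) by norm_num, Real.rpow_natCast]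
      ring
    rw [h3, Real.mul_self_sqrt (mul_nonneg (hr0 _) (hc0 _)), ← mul_assoc, hwf p hp,
      mul_comm (B p.1 p.2) _, mul_comm]
  -- the total sum equals the sum over s
  have hσ : ∑ p ∈ s, B p.1 p.2 = ∑ i, ∑ j, B i j := by
    rw [hs, Finset.sum_filter_of_ne (fun p _ hne => lt_of_le_of_ne (hB p.1 p.2) (Ne.symm hne))]
    exact Fintype.sum_prod_type _
  have hσ0 : 0 ≤ ∑ i, ∑ j, B i j :=
    Finset.sum_nonneg fun i _ => Finset.sum_nonneg fun j _ => hB i j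
  -- row-normalized sums
  have hrow : ∑ p ∈ s, B p.1 p.2 / r p.1 ≤ (m : ℝ) := by
    calc ∑ p ∈ s, B p.1 p.2 / r p.1
        ≤ ∑ p : Fin m × Fin n, B p.1 p.2 / r p.1 :=
          Finset.sum_le_sum_of_subset_of_nonneg (Finset.filter_subset _ _)
            (fun p _ _ => div_nonneg (hB p.1 p.2) (hr0 p.1))
      _ = ∑ i, ∑ j, B i j / r i := Fintype.sum_prod_type _
      _ = ∑ i : Fin m, r i / r i := by
          refine Finset.sum_congr rfl fun i _ => ?_
          rw [← Finset.sum_div]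
      _ ≤ ∑ _i : Fin m, (1:ℝ) := Finset.sum_le_sum fun i _ => div_self_le_one _
      _ = (m : ℝ) := by simp
  have hcol : ∑ p ∈ s, B p.1 p.2 / c p.2 ≤ (n : ℝ) := by
    calc ∑ p ∈ s, B p.1 p.2 / c p.2
        ≤ ∑ p : Fin m × Fin n, B p.1 p.2 / c p.2 :=
          Finset.sum_le_sum_of_subset_of_nonneg (Finset.filter_subset _ _)
            (fun p _ _ => div_nonneg (hB p.1 p.2) (hc0 p.2))
      _ = ∑ i, ∑ j, B i j / c j := Fintype.sum_prod_type _
      _ = ∑ j, ∑ i, B i j / c j := Finset.sum_comm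
      _ = ∑ j : Fin n, c j / c j := by
          refine Finset.sum_congr rfl fun j _ => ?_
          rw [← Finset.sum_div]
      _ ≤ ∑ _j : Fin n, (1:ℝ) := Finset.sum_le_sum fun j _ => div_self_le_one _
      _ = (n : ℝ) := by simp
  -- Cauchy–Schwarz bound on ∑ w
  have hwsum : ∑ p ∈ s, w p ≤ ((m : ℝ) * n) ^ ((1:ℝ)/2) := by
    have hcs2 : Real.HolderConjugate 2 2 := Real.HolderConjugate.two_two
    have h := Real.inner_le_Lp_mul_Lq_of_nonneg s hcs2
      (f := fun p => Real.sqrt (B p.1 p.2 / r p.1))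
      (g := fun p => Real.sqrt (B p.1 p.2 / c p.2))
      (fun p _ => Real.sqrt_nonneg _) (fun p _ => Real.sqrt_nonneg _)
    have hsq1 : ∀ p : Fin m × Fin n,
        Real.sqrt (B p.1 p.2 / r p.1) ^ (2:ℝ) = B p.1 p.2 / r p.1 := by
      intro p
      rw [show (2:ℝ) = ((2:ℕ):ℝ) by norm_num, Real.rpow_natCast,
        Real.sq_sqrt (div_nonneg (hB p.1 p.2) (hr0 p.1))]
    have hsq2 : ∀ p : Fin m × Fin n,
        Real.sqrt (B p.1 p.2 / c p.2) ^ (2:ℝ) = B p.1 p.2 / c p.2 := by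
      intro p
      rw [show (2:ℝ) = ((2:ℕ):ℝ) by norm_num, Real.rpow_natCast,
        Real.sq_sqrt (div_nonneg (hB p.1 p.2) (hc0 p.2))]
    simp only [hsq1, hsq2] at h
    have hnn1 : 0 ≤ ∑ p ∈ s, B p.1 p.2 / r p.1 :=
      Finset.sum_nonneg fun q _ => div_nonneg (hB q.1 q.2) (hr0 q.1)
    have hnn2 : 0 ≤ ∑ p ∈ s, B p.1 p.2 / c p.2 :=
      Finset.sum_nonneg fun q _ => div_nonneg (hB q.1 q.2) (hc0 q.2)
    calc ∑ p ∈ s, w p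
        ≤ (∑ p ∈ s, B p.1 p.2 / r p.1) ^ ((1:ℝ)/2)
          * (∑ p ∈ s, B p.1 p.2 / c p.2) ^ ((1:ℝ)/2) := h
      _ ≤ (m : ℝ) ^ ((1:ℝ)/2) * (n : ℝ) ^ ((1:ℝ)/2) := by
          gcongr <;> first | exact hnn1 | exact hnn2 | exact hrow | exact hcol
      _ = ((m : ℝ) * n) ^ ((1:ℝ)/2) := by
          rw [Real.mul_rpow (Nat.cast_nonneg m) (Nat.cast_nonneg n)]
  -- the weighted third moment is bounded by T
  set T : ℝ := ∑ i, ∑ j, B i j * ((∑ j', B i j') * (∑ i', B i' j)) with hT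
  have hT0 : 0 ≤ T :=
    Finset.sum_nonneg fun i _ => Finset.sum_nonneg fun j _ =>
      mul_nonneg (hB i j) (mul_nonneg (hr0 i) (hc0 j))
  have hTs : ∑ p ∈ s, w p * f p ^ (3:ℝ) ≤ T := by
    rw [Finset.sum_congr rfl hwf3]
    calc ∑ p ∈ s, B p.1 p.2 * (r p.1 * c p.2)
        ≤ ∑ p : Fin m × Fin n, B p.1 p.2 * (r p.1 * c p.2) :=
          Finset.sum_le_sum_of_subset_of_nonneg (Finset.filter_subset _ _)
            (fun p _ _ => mul_nonneg (hB p.1 p.2) (mul_nonneg (hr0 p.1) (hc0 p.2)))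
      _ = T := Fintype.sum_prod_type _
  -- Hölder's inequality
  have holder := Real.inner_le_weight_mul_Lp_of_nonneg s (p := 3) (by norm_num) w f hw0 hf0
  rw [Finset.sum_congr rfl hwf, hσ] at holder
  have hkey : ∑ i, ∑ j, B i j ≤ (((m:ℝ) * n) ^ ((1:ℝ)/2)) ^ (1 - (3:ℝ)⁻¹) * T ^ ((3:ℝ)⁻¹) := by
    refine holder.trans ?_
    gcongr <;>
      first
        | exact Finset.sum_nonneg fun q _ => hw0 q
        | exact Finset.sum_nonneg fun q _ =>
            mul_nonneg (hw0 q) (Real.rpow_nonneg (hf0 q) _)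
        | exact hwsum
        | exact hTs
        | norm_num
  -- cube both sides
  have hmn0 : (0:ℝ) ≤ (m:ℝ) * n := by positivity
  calc (∑ i, ∑ j, B i j) ^ 3
      ≤ ((((m:ℝ) * n) ^ ((1:ℝ)/2)) ^ (1 - (3:ℝ)⁻¹) * T ^ ((3:ℝ)⁻¹)) ^ 3 := by
        exact pow_le_pow_left₀ hσ0 hkey 3
    _ = ((m:ℝ) * n) * T := by
        have e1 : (((m:ℝ) * n) ^ ((1:ℝ)/2)) ^ (1 - (3:ℝ)⁻¹) = ((m:ℝ) * n) ^ ((1:ℝ)/3) := by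
          rw [← Real.rpow_mul hmn0]
          norm_num
        rw [e1, mul_pow, ← Real.rpow_natCast (((m:ℝ) * n) ^ ((1:ℝ)/3)) 3,
          ← Real.rpow_mul hmn0, ← Real.rpow_natCast (T ^ ((3:ℝ)⁻¹)) 3,
          ← Real.rpow_mul hT0]
        norm_num

/-- Atkinson–Watterson–Moran: for an `m × n` matrix `B` with
nonnegative real entries, `σ(B)³/(mn) ≤ σ(B Bᵀ B)`, where `σ` denotes the sum
of all entries. -/
theorem stmt15 (m n : ℕ) (B : Matrix (Fin m) (Fin n) ℝ)
    (hB : ∀ i j, 0 ≤ B i j) :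
    (∑ i, ∑ j, B i j) ^ 3 / (m * n : ℝ) ≤
      ∑ i, ∑ j, (B * Bᵀ * B) i j := by
  rcases Nat.eq_zero_or_pos m with hm | hm
  · subst hm; simp
  rcases Nat.eq_zero_or_pos n with hn | hn
  · subst hn; simp
  have hmn : (0:ℝ) < (m:ℝ) * n := by positivity
  rw [div_le_iff₀ hmn]
  have hT : ∑ i, ∑ j, (B * Bᵀ * B) i j
      = ∑ i, ∑ j, B i j * ((∑ j', B i j') * (∑ i', B i' j)) := by
    calc ∑ i, ∑ l, (B * Bᵀ * B) i l
        = ∑ i, ∑ l, ∑ k, (∑ j, B i j * B k j) * B k l := by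
          simp [Matrix.mul_apply, Matrix.transpose_apply]
      _ = ∑ i, ∑ k, (∑ j, B i j * B k j) * (∑ l, B k l) := by
          refine Finset.sum_congr rfl fun i _ => ?_
          rw [Finset.sum_comm]
          exact Finset.sum_congr rfl fun k _ => by rw [← Finset.mul_sum]
      _ = ∑ k, ∑ i, (∑ j, B i j * B k j) * (∑ l, B k l) := Finset.sum_comm
      _ = ∑ k, ∑ j, B k j * ((∑ j', B k j') * (∑ i', B i' j)) := by
          refine Finset.sum_congr rfl fun k _ => ?_
          rw [← Finset.sum_mul, Finset.sum_comm, Finset.sum_mul]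
          refine Finset.sum_congr rfl fun j _ => ?_
          rw [← Finset.sum_mul]
          ring
  rw [hT, mul_comm]
  exact awm_key m n B hB
end

section
/- Let q be a prime, t ≥ 2, and suppose P ∈ F_q[x_1, ..., x_n] is a polynomial of total degree at most t with n > t(t+1)/2. If P has at least one root in F_q^n, then the zero set of P contains a full affine line {av + b : v ∈ F_q} with a ≠ 0. -/
open MvPolynomial Finset

lemma aux_totalDegree_translate {n : ℕ} {R : Type*} [CommRing R] [Nontrivial R]
    (P : MvPolynomial (Fin n) R) (b : Fin n → R) :
    (aeval (fun i => X i + C (b i)) P).totalDegree ≤ P.totalDegree := by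
  conv_lhs => rw [P.as_sum, map_sum]
  apply totalDegree_finsetSum_le
  intro d hd
  rw [aeval_monomial]
  refine (totalDegree_mul _ _).trans ?_
  have h1 : (algebraMap R (MvPolynomial (Fin n) R) (coeff d P)).totalDegree = 0 := by
    simpa using totalDegree_C (σ := Fin n) (coeff d P)
  rw [h1, zero_add]
  refine le_trans ?_ (le_totalDegree hd)
  refine (totalDegree_finset_prod _ _).trans ?_
  refine Finset.sum_le_sum ?_
  intro i _
  refine (totalDegree_pow _ _).trans ?_
  have h2 : ((X i + C (b i) : MvPolynomial (Fin n) R)).totalDegree ≤ 1 := by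
    refine (totalDegree_add _ _).trans ?_
    simp [totalDegree_X, totalDegree_C]
  calc d i * ((X i + C (b i) : MvPolynomial (Fin n) R)).totalDegree
      ≤ d i * 1 := Nat.mul_le_mul_left _ h2
    _ = d i := by ring

lemma aux_eval_smul {n m : ℕ} {R : Type*} [CommRing R]
    {φ : MvPolynomial (Fin n) R} (h : φ.IsHomogeneous m) (x : R) (a : Fin n → R) :
    MvPolynomial.eval (x • a) φ = x ^ m * MvPolynomial.eval a φ := by
  rw [eval_eq, eval_eq, Finset.mul_sum]
  refine Finset.sum_congr rfl fun d hd => ?_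
  have hdeg : d.degree = m := by
    rw [Finsupp.degree_eq_weight_one]
    exact h (mem_support_iff.mp hd)
  have key : ∏ i ∈ d.support, (x • a) i ^ d i
      = x ^ m * ∏ i ∈ d.support, a i ^ d i := by
    rw [← hdeg, Finsupp.degree_apply, ← Finset.prod_pow_eq_pow_sum, ← Finset.prod_mul_distrib]
    exact Finset.prod_congr rfl fun i _ => by simp [mul_pow]
  rw [key]; ring

/-- Let `q` be a prime, `t ≥ 2`, and `P ∈ F_q[x₁,…,xₙ]` of total
degree at most `t` with `n > t(t+1)/2`. If `P` has a root in `F_q^n`, then the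
zero set of `P` contains a full affine line `{x•a + b : x ∈ F_q}` with `a ≠ 0`. -/
theorem stmt17 (q t n : ℕ) (hq : q.Prime) (ht : 2 ≤ t) (hn : t * (t + 1) / 2 < n)
    (P : MvPolynomial (Fin n) (ZMod q))
    (hdeg : P.totalDegree ≤ t)
    (hroot : ∃ v : Fin n → ZMod q, MvPolynomial.eval v P = 0) :
    ∃ a b : Fin n → ZMod q, a ≠ 0 ∧
      ∀ x : ZMod q, MvPolynomial.eval (x • a + b) P = 0 := by
  haveI : Fact q.Prime := ⟨hq⟩
  obtain ⟨b, hb⟩ := hroot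
  set P' : MvPolynomial (Fin n) (ZMod q) := aeval (fun i => X i + C (b i)) P with hP'
  have heval : ∀ v : Fin n → ZMod q, MvPolynomial.eval v P' = MvPolynomial.eval (v + b) P := by
    intro v
    rw [hP', aeval_def, eval₂_comp_left (eval v)]
    have hcomp : (eval v).comp (algebraMap (ZMod q) (MvPolynomial (Fin n) (ZMod q))) =
        RingHom.id (ZMod q) := by
      ext r; simp
    rw [hcomp]
    simp only [Function.comp_def, eval_add, eval_X, eval_C]
    rfl
  have hdeg' : P'.totalDegree ≤ t := (aux_totalDegree_translate P b).trans hdeg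
  set f : ℕ → MvPolynomial (Fin n) (ZMod q) := fun i => homogeneousComponent i P' with hf
  have hsum : (∑ i ∈ Finset.Icc 1 t, (f i).totalDegree) < Fintype.card (Fin n) := by
    rw [Fintype.card_fin]
    have h2 : (∑ i ∈ Finset.Icc 1 t, (f i).totalDegree) ≤ ∑ i ∈ Finset.Icc 1 t, i :=
      Finset.sum_le_sum fun i _ =>
        (homogeneousComponent_isHomogeneous i P').totalDegree_le
    have h3 : (∑ i ∈ Finset.Icc 1 t, i) = ∑ i ∈ Finset.range (t + 1), i := by
      apply Finset.sum_subset
      · intro i hi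
        simp only [Finset.mem_Icc] at hi
        simp only [Finset.mem_range]
        omega
      · intro i hi hni
        simp only [Finset.mem_range] at hi
        simp only [Finset.mem_Icc] at hni
        omega
    have h4 : (∑ i ∈ Finset.range (t + 1), i) * 2 = (t + 1) * t := by
      simpa using Finset.sum_range_id_mul_two (t + 1)
    have h5 : t * (t + 1) = (t + 1) * t := Nat.mul_comm _ _
    omega
  have hdvd := char_dvd_card_solutions_of_sum_lt q hsum
  have hzero : ∀ i ∈ Finset.Icc 1 t, MvPolynomial.eval (0 : Fin n → ZMod q) (f i) = 0 := by
    intro i hi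
    obtain ⟨hi1, _⟩ := Finset.mem_Icc.mp hi
    have hc0 : (f i).coeff 0 = 0 := by
      refine (homogeneousComponent_isHomogeneous i P').coeff_eq_zero ?_
      simp only [Finsupp.degree_apply, Finsupp.support_zero, Finset.sum_empty]
      omega
    have h7 : MvPolynomial.eval (fun _ => (0 : ZMod q)) (f i) = 0 := by
      rw [eval_zero', constantCoeff_eq]; exact hc0
    exact h7
  have hcard := Nat.le_of_dvd (Fintype.card_pos_iff.mpr ⟨⟨0, hzero⟩⟩) hdvd
  obtain ⟨a', ha'⟩ := Fintype.exists_ne_of_one_lt_card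
    (lt_of_lt_of_le hq.one_lt hcard) ⟨0, hzero⟩
  refine ⟨a'.1, b, fun h => ha' (Subtype.ext h), fun x => ?_⟩
  have hline : x • a'.1 + b = (x • a'.1) + b := rfl
  rw [← heval (x • a'.1)]
  have hsplit : (∑ i ∈ Finset.range (t + 1), f i) = P' := by
    rw [← sum_homogeneousComponent P']
    symm
    apply Finset.sum_subset
    · exact Finset.range_subset_range.mpr (by omega)
    · intro i _ hi
      simp only [Finset.mem_range, not_lt] at hi
      exact homogeneousComponent_eq_zero (n := i) (φ := P') (by omega)
  rw [← hsplit, map_sum]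
  refine Finset.sum_eq_zero fun i hi => ?_
  rw [aux_eval_smul (homogeneousComponent_isHomogeneous i P') x a'.1]
  rcases Nat.eq_zero_or_pos i with h0 | h0
  · subst h0
    have h5 : MvPolynomial.eval a'.1 (f 0) = MvPolynomial.eval b P := by
      show MvPolynomial.eval a'.1 (homogeneousComponent 0 P') = _
      rw [homogeneousComponent_zero, eval_C]
      have h6 := heval 0
      rw [zero_add] at h6
      rw [← h6]
      simp [eval_zero, eval_zero', constantCoeff_eq]
    rw [h5, hb, mul_zero]
  · have : MvPolynomial.eval a'.1 (f i) = 0 := by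
      apply a'.2
      rw [Finset.mem_Icc]
      simp only [Finset.mem_range] at hi
      omega
    rw [this, mul_zero]
end

section
/- Let p be a prime and t ≥ 2 with t ≤ p. Then r_t(F_p^{t(t-1)/2}) ≥ p^{t(t-1)/2 - 1}, where r_t(F_p^n) is the maximum size of a subset of F_p^n containing no t points in (nontrivial) arithmetic progression. -/
open Polynomial Finset

section Aux
variable (p : ℕ) [Fact p.Prime]

lemma aux_mem_range {K : Type*} [Field K] [Algebra (ZMod p) K] [Fintype K]
    (x : K) (hx : x ^ p = x) : ∃ y : ZMod p, algebraMap (ZMod p) K y = x := by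
  classical
  have hp := (Fact.out : p.Prime)
  set φ := algebraMap (ZMod p) K with hφ
  have hinj : Function.Injective φ := (algebraMap (ZMod p) K).injective
  set P : K[X] := X ^ p - X with hP
  have h1 : P.coeff p = 1 := by
    simp [hP, coeff_X, coeff_X_pow, Ne.symm hp.ne_one]
  have hPne : P ≠ 0 := fun h => by simp [h] at h1
  have hdeg : P.natDegree ≤ p := by
    refine le_trans (natDegree_sub_le _ _) ?_
    simp [hp.one_lt.le]
  have hroot : ∀ y : ZMod p, (φ y) ∈ P.roots := by
    intro y
    rw [mem_roots hPne]
    simp [hP, IsRoot, ← map_pow, ZMod.pow_card]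
  have hsub : (univ.image φ) ⊆ P.roots.toFinset := by
    intro z hz
    simp only [mem_image] at hz
    obtain ⟨y, -, rfl⟩ := hz
    simpa using hroot y
  have hcard : (univ.image φ).card = p := by
    rw [Finset.card_image_of_injective _ hinj, Finset.card_univ, ZMod.card]
  have heq : univ.image φ = P.roots.toFinset := by
    apply Finset.eq_of_subset_of_card_le hsub
    calc P.roots.toFinset.card ≤ Multiset.card P.roots := Multiset.toFinset_card_le _
      _ ≤ P.natDegree := P.card_roots'
      _ ≤ p := hdeg
      _ = _ := hcard.symm
  have hxmem : x ∈ P.roots.toFinset := by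
    simp only [Multiset.mem_toFinset]
    rw [mem_roots hPne]
    simp [hP, IsRoot, hx]
  rw [← heq] at hxmem
  simp only [mem_image] at hxmem
  obtain ⟨y, -, hy⟩ := hxmem
  exact ⟨y, hy⟩

section blk
variable {K : Type*} [Field K] [Algebra (ZMod p) K] [Fintype K]

lemma aux_pow_card_pow (m : ℕ) (hcard : Fintype.card K = p ^ m) (x : K) : x ^ p ^ m = x := by
  rw [← hcard]; exact FiniteField.pow_card x

lemma aux_N_pow (m : ℕ) (hm : m ≠ 0) (hcard : Fintype.card K = p ^ m) (x : K) :
    (x ^ (∑ j ∈ range m, p ^ j)) ^ p = x ^ (∑ j ∈ range m, p ^ j) := by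
  have hp := (Fact.out : p.Prime)
  set em := ∑ j ∈ range m, p ^ j with hem
  rcases eq_or_ne x 0 with rfl | hx
  · have hem0 : em ≠ 0 := by
      rw [hem]
      have : 0 < ∑ j ∈ range m, p ^ j := by
        apply Finset.sum_pos (fun j _ => pow_pos hp.pos j)
        exact Finset.nonempty_range_iff.mpr hm
      omega
    simp [zero_pow hem0, hp.ne_zero]
  · have h1 : (∑ j ∈ range m, p ^ j) * p = ∑ j ∈ range m, p ^ (j + 1) := by
      rw [Finset.sum_mul]; exact Finset.sum_congr rfl fun j _ => (pow_succ p j).symm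
    have h2 : (∑ j ∈ range m, p ^ (j + 1)) + p ^ 0 = ∑ j ∈ range (m + 1), p ^ j :=
      (Finset.sum_range_succ' _ m).symm
    have h3 : ∑ j ∈ range (m + 1), p ^ j = (∑ j ∈ range m, p ^ j) + p ^ m :=
      Finset.sum_range_succ _ m
    have key : em * p + 1 = em + p ^ m := by
      calc em * p + 1 = (∑ j ∈ range m, p ^ (j + 1)) + p ^ 0 := by rw [hem, h1, pow_zero]
        _ = ∑ j ∈ range (m + 1), p ^ j := h2
        _ = em + p ^ m := by rw [h3, hem]
    have hx2 : x ^ (em * p + 1) = x ^ (em + p ^ m) := by rw [key]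
    rw [pow_add, pow_add, pow_one, aux_pow_card_pow p m hcard] at hx2
    have := mul_right_cancel₀ hx hx2
    rwa [pow_mul] at this

noncomputable def nrm (m : ℕ) (hm : m ≠ 0) (hcard : Fintype.card K = p ^ m) (x : K) : ZMod p :=
  (aux_mem_range p (x ^ (∑ j ∈ range m, p ^ j)) (aux_N_pow p m hm hcard x)).choose

lemma nrm_spec (m : ℕ) (hm : m ≠ 0) (hcard : Fintype.card K = p ^ m) (x : K) :
    algebraMap (ZMod p) K (nrm p m hm hcard x) = x ^ (∑ j ∈ range m, p ^ j) :=
  (aux_mem_range p _ (aux_N_pow p m hm hcard x)).choose_spec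

lemma nrm_ne_zero (m : ℕ) (hm : m ≠ 0) (hcard : Fintype.card K = p ^ m) {x : K} (hx : x ≠ 0) :
    nrm p m hm hcard x ≠ 0 := by
  intro h
  have := nrm_spec p m hm hcard x
  rw [h, map_zero] at this
  exact pow_ne_zero _ hx this.symm

end blk

lemma key_poly {K : Type*} [Field K] [Algebra (ZMod p) K] [Fintype K]
    (m : ℕ) (hm : m ≠ 0) (hcard : Fintype.card K = p ^ m)
    (hpow : ∀ x : K, x ^ p ^ m = x) (A B : K) :
    ∃ Q : (ZMod p)[X], Q.natDegree ≤ m ∧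
      algebraMap (ZMod p) K (Q.coeff m) = B ^ (∑ j ∈ range m, p ^ j) ∧
      (B = 0 → Q.natDegree = 0) ∧
      ∀ i : ZMod p, algebraMap (ZMod p) K (Q.eval i) =
        (A + algebraMap (ZMod p) K i * B) ^ (∑ j ∈ range m, p ^ j) := by
  classical
  have hp := (Fact.out : p.Prime)
  haveI : CharP K p := charP_of_injective_ringHom (algebraMap (ZMod p) K).injective p
  set φ := algebraMap (ZMod p) K with hφ
  have hinj : Function.Injective φ := φ.injective
  set em := ∑ j ∈ range m, p ^ j with hem
  -- the factors
  set F : ℕ → K[X] := fun j => C (A ^ p ^ j) + C (B ^ p ^ j) * X with hF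
  set R : K[X] := ∏ j ∈ range m, F j with hR
  -- map by frobenius
  have hFmap : ∀ j, (F j).map (frobenius K p) = F (j + 1) := by
    intro j
    simp only [hF, Polynomial.map_add, Polynomial.map_mul, map_C, map_X, frobenius_def,
      ← pow_mul, ← pow_succ]
  have hF0m : F m = F 0 := by
    simp only [hF, hpow A, hpow B, pow_zero, pow_one]
  have hRmap : R.map (frobenius K p) = R := by
    rcases eq_or_ne (F 0) 0 with hF0 | hF0
    · -- then A = B = 0
      have hA : A = 0 := by
        have := congrArg (fun q : K[X] => q.coeff 0) hF0
        simpa [hF] using this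
      have hB : B = 0 := by
        have := congrArg (fun q : K[X] => q.coeff 1) hF0
        simpa [hF, coeff_C] using this
      have : R = 0 := by
        rw [hR]
        exact Finset.prod_eq_zero (Finset.mem_range.mpr (Nat.pos_of_ne_zero hm)) hF0
      simp [this]
    · have h1 : R.map (frobenius K p) = ∏ j ∈ range m, F (j + 1) := by
        rw [hR, Polynomial.map_prod]
        exact Finset.prod_congr rfl fun j _ => hFmap j
      have h2 : (∏ j ∈ range m, F (j + 1)) * F 0 = R * F 0 := by
        rw [← Finset.prod_range_succ' F m, Finset.prod_range_succ, hF0m]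
      exact h1.trans (mul_right_cancel₀ hF0 h2)
  -- coefficients are fixed by frobenius
  have hcoefs : ∀ n, ∃ y : ZMod p, φ y = R.coeff n := by
    intro n
    apply aux_mem_range
    have := congrArg (fun q : K[X] => q.coeff n) hRmap
    simpa [coeff_map, frobenius_def] using this
  obtain ⟨Q, hQ⟩ : ∃ Q : (ZMod p)[X], Q.map φ = R := by
    have : R ∈ Polynomial.lifts φ := by
      rw [Polynomial.lifts_iff_coeff_lifts]
      exact fun n => (hcoefs n).imp fun y hy => hy
    obtain ⟨Q, hQ⟩ := this
    exact ⟨Q, hQ⟩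
  have hdegF : ∀ j, (F j).natDegree ≤ 1 := by
    intro j
    refine le_trans (natDegree_add_le _ _)
      (max_le (by simp) (le_trans (natDegree_mul_le) (by simp)))
  have hdegR : R.natDegree ≤ m := by
    refine le_trans (hR ▸ Polynomial.natDegree_prod_le (range m) F) ?_
    calc ∑ j ∈ range m, (F j).natDegree ≤ ∑ _j ∈ range m, 1 :=
          Finset.sum_le_sum fun j _ => hdegF j
      _ = m := by simp
  have hdegQ : Q.natDegree = R.natDegree := by
    rw [← hQ, Polynomial.natDegree_map_eq_of_injective hinj]
  refine ⟨Q, hdegQ ▸ hdegR, ?_, ?_, ?_⟩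
  · -- coefficient at m
    have h1 : φ (Q.coeff m) = R.coeff m := by rw [← hQ, coeff_map]
    rw [h1, hR]
    have h2 : (∏ j ∈ range m, F j).coeff (#(range m) * 1) = ∏ j ∈ range m, (F j).coeff 1 :=
      Polynomial.coeff_prod_of_natDegree_le (range m) F 1 fun j _ => hdegF j
    rw [Finset.card_range, mul_one] at h2
    rw [h2]
    have h3 : ∀ j, (F j).coeff 1 = B ^ p ^ j := by
      intro j
      show (C (A ^ p ^ j) + C (B ^ p ^ j) * X).coeff 1 = B ^ p ^ j
      generalize A ^ p ^ j = a
      generalize B ^ p ^ j = b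
      simp [coeff_C]
    rw [Finset.prod_congr rfl fun j _ => h3 j, Finset.prod_pow_eq_pow_sum]
  · -- B = 0 → natDegree = 0
    intro hB
    rw [hdegQ, hR]
    have hFj : ∀ j ∈ range m, F j = C (A ^ p ^ j) := by
      intro j _
      simp [hF, hB, zero_pow (Nat.pow_pos hp.pos).ne']
    rw [Finset.prod_congr rfl hFj, ← map_prod]
    exact natDegree_C _
  · -- evaluation
    intro i
    have h1 : φ (Q.eval i) = R.eval (φ i) := by
      rw [← hQ, Polynomial.eval_map, Polynomial.eval₂_at_apply]
    rw [h1, hR, Polynomial.eval_prod]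
    set x := φ i with hx
    have hxp : x ^ p = x := by rw [hx, ← map_pow, ZMod.pow_card]
    have hxpj : ∀ j, x ^ p ^ j = x := by
      intro j
      induction j with
      | zero => simp
      | succ n ih => rw [pow_succ, pow_mul, ih, hxp]
    have h2 : ∀ j, (F j).eval x = (A + x * B) ^ p ^ j := by
      intro j
      rw [add_pow_char_pow]
      simp [hF, mul_pow, hxpj j, mul_comm]
    rw [Finset.prod_congr rfl fun j _ => h2 j, Finset.prod_pow_eq_pow_sum]

end Aux

set_option maxHeartbeats 1000000 in
set_option synthInstance.maxHeartbeats 400000 in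
/-- Let `p` be a prime and `2 ≤ t ≤ p`. Then
`r_t(F_p^{t(t-1)/2}) ≥ p^{t(t-1)/2 - 1}`: there is a subset of
`F_p^{t(t-1)/2}` of size at least `p^{t(t-1)/2 - 1}` containing no `t` points
in nontrivial arithmetic progression. -/
theorem stmt18 (p t : ℕ) (hp : p.Prime) (ht : 2 ≤ t) (htp : t ≤ p) :
    ∃ S : Finset (Fin (t * (t - 1) / 2) → ZMod p),
      (∀ a b : Fin (t * (t - 1) / 2) → ZMod p, b ≠ 0 →
        ∃ i : ℕ, i < t ∧ a + i • b ∉ S) ∧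
      p ^ (t * (t - 1) / 2 - 1) ≤ S.card := by
  classical
  haveI : Fact p.Prime := ⟨hp⟩
  set n := t * (t - 1) / 2 with hn
  set T := t - 1 with hT
  haveI instF : ∀ m : ℕ, Fintype (GaloisField p m) := fun _ => Fintype.ofFinite _
  have hcardK : ∀ k : Fin T, Fintype.card (GaloisField p ((k : ℕ) + 1)) = p ^ ((k : ℕ) + 1) := by
    intro k
    rw [← Nat.card_eq_fintype_card]
    exact GaloisField.card p _ (Nat.succ_ne_zero _)
  have hfr : ∀ k : Fin T, Module.finrank (ZMod p) (GaloisField p ((k : ℕ) + 1)) = (k : ℕ) + 1 := by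
    intro k
    have h := Module.card_eq_pow_finrank (K := ZMod p) (V := GaloisField p ((k : ℕ) + 1))
    rw [hcardK k, ZMod.card] at h
    exact (Nat.pow_right_injective hp.two_le h.symm)
  have hsum : ∑ k : Fin T, ((k : ℕ) + 1) = n := by
    rw [Fin.sum_univ_eq_sum_range (fun i => i + 1) T]
    have hTt : T + 1 = t := by omega
    calc ∑ i ∈ range T, (i + 1) = (∑ i ∈ range T, (i + 1)) + 0 := by ring
      _ = ∑ i ∈ range (T + 1), i := (Finset.sum_range_succ' id T).symm
      _ = ∑ i ∈ range t, i := by rw [hTt]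
      _ = t * (t - 1) / 2 := Finset.sum_range_id t
  have hfrV : Module.finrank (ZMod p) (∀ k : Fin T, GaloisField p ((k : ℕ) + 1)) = n := by
    rw [Module.finrank_pi_fintype]
    rw [Finset.sum_congr rfl fun k _ => hfr k]
    exact hsum
  have hfrD : Module.finrank (ZMod p) (Fin n → ZMod p) = n := by
    rw [Module.finrank_pi]; simp
  let e : (Fin n → ZMod p) ≃ₗ[ZMod p] (∀ k : Fin T, GaloisField p ((k : ℕ) + 1)) :=
    LinearEquiv.ofFinrankEq _ _ (hfrD.trans hfrV.symm)
  set f : (∀ k : Fin T, GaloisField p ((k : ℕ) + 1)) → ZMod p :=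
    fun v => ∑ k : Fin T, nrm p ((k : ℕ) + 1) (Nat.succ_ne_zero _) (hcardK k) (v k) with hf
  have hcV : Fintype.card (∀ k : Fin T, GaloisField p ((k : ℕ) + 1)) = p ^ n := by
    rw [Fintype.card_pi, Finset.prod_congr rfl fun k _ => hcardK k,
      Finset.prod_pow_eq_pow_sum, hsum]
  have hn1 : 1 ≤ n := by
    rw [hn]
    have h2 : 2 * 1 ≤ t * (t - 1) := Nat.mul_le_mul ht (by omega)
    omega
  obtain ⟨c, hc⟩ := Fintype.exists_le_card_fiber_of_mul_le_card (f := f) (n := p ^ (n - 1))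
    (by
      rw [hcV, ZMod.card]
      have : p * p ^ (n - 1) = p ^ n := by
        rw [← pow_succ']
        congr 1
        omega
      omega)
  refine ⟨univ.filter (fun x : Fin n → ZMod p => f (e x) = c), ?_, ?_⟩
  · -- progression-free
    intro a b hb
    by_contra hcon
    push_neg at hcon
    set A := e a with hA
    set B := e b with hB
    have hBne : B ≠ 0 := fun h0 => hb (by
      have := congrArg e.symm h0
      simpa [hB, map_zero] using this)
    have hAB : ∀ i : ℕ, i < t → f (A + ((i : ZMod p)) • B) = c := by
      intro i hi
      have h1 := hcon i hi
      rw [Finset.mem_filter] at h1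
      have h2 : e (a + i • b) = A + ((i : ZMod p)) • B := by
        rw [map_add, map_nsmul, hA, hB, Nat.cast_smul_eq_nsmul]
      rw [h2] at h1
      exact h1.2
    -- choose block polynomials
    choose Q hQdeg hQcoeff hQzero hQeval using fun k : Fin T =>
      key_poly p ((k : ℕ) + 1) (Nat.succ_ne_zero _) (hcardK k)
        (fun x => aux_pow_card_pow p _ (hcardK k) x) (A k) (B k)
    set QQ : (ZMod p)[X] := (∑ k, Q k) - C c with hQQ
    have hQeval' : ∀ (k : Fin T) (x : ZMod p),
        (Q k).eval x = nrm p ((k : ℕ) + 1) (Nat.succ_ne_zero _) (hcardK k) ((A + x • B) k) := by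
      intro k x
      apply (algebraMap (ZMod p) (GaloisField p ((k : ℕ) + 1))).injective
      rw [hQeval k x, nrm_spec]
      congr 1
      simp [Algebra.smul_def]
    have hroots : ∀ i : ℕ, i < t → QQ.eval ((i : ZMod p)) = 0 := by
      intro i hi
      rw [hQQ, eval_sub, eval_C, Polynomial.eval_finset_sum]
      rw [Finset.sum_congr rfl fun k _ => hQeval' k ((i : ZMod p))]
      have : ∑ k : Fin T, nrm p ((k : ℕ) + 1) (Nat.succ_ne_zero _) (hcardK k)
          ((A + ((i : ZMod p)) • B) k) = f (A + ((i : ZMod p)) • B) := by rw [hf]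
      rw [this, hAB i hi, sub_self]
    -- QQ is nonzero
    have hex : ∃ k, B k ≠ 0 := by
      by_contra hbb
      push_neg at hbb
      exact hBne (funext hbb)
    set s0 := univ.filter (fun k : Fin T => B k ≠ 0) with hs0
    have hs0ne : s0.Nonempty := by
      obtain ⟨k, hk⟩ := hex
      exact ⟨k, by simp [hs0, hk]⟩
    set k0 := s0.max' hs0ne with hk0
    have hk0mem : k0 ∈ s0 := s0.max'_mem hs0ne
    have hBk0 : B k0 ≠ 0 := (Finset.mem_filter.mp hk0mem).2
    have hcoeffQQ : QQ.coeff ((k0 : ℕ) + 1) = (Q k0).coeff ((k0 : ℕ) + 1) := by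
      rw [hQQ, Polynomial.coeff_sub, Polynomial.finset_sum_coeff,
        Polynomial.coeff_C, if_neg (Nat.succ_ne_zero _)]
      rw [Finset.sum_eq_single k0 ?side1 (by simp), sub_zero]
      case side1 =>
        intro k _ hkne
        by_cases hBk : B k = 0
        · exact Polynomial.coeff_eq_zero_of_natDegree_lt
            (by rw [hQzero k hBk]; omega)
        · have hkmem : k ∈ s0 := by simp [hs0, hBk]
          have hkle : k ≤ k0 := Finset.le_max' s0 k hkmem
          have hklt : (k : ℕ) < (k0 : ℕ) := by
            rcases lt_or_eq_of_le hkle with h | h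
            · exact h
            · exact absurd h hkne
          exact Polynomial.coeff_eq_zero_of_natDegree_lt
            (lt_of_le_of_lt (hQdeg k) (by omega))
    have hQQcoeffne : QQ.coeff ((k0 : ℕ) + 1) ≠ 0 := by
      rw [hcoeffQQ]
      intro h0
      have := hQcoeff k0
      rw [h0, map_zero] at this
      exact pow_ne_zero _ hBk0 this.symm
    have hQQne : QQ ≠ 0 := fun h0 => hQQcoeffne (by rw [h0, Polynomial.coeff_zero])
    have hQQdeg : QQ.natDegree ≤ T := by
      rw [hQQ]
      refine le_trans (Polynomial.natDegree_sub_le _ _) (max_le ?_ (by simp))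
      refine Polynomial.natDegree_sum_le_of_forall_le univ Q fun k _ => ?_
      have := hQdeg k
      have := k.isLt
      omega
    -- t distinct roots
    have hsubr : (range t).image (Nat.cast : ℕ → ZMod p) ⊆ QQ.roots.toFinset := by
      intro z hz
      simp only [Finset.mem_image, Finset.mem_range] at hz
      obtain ⟨i, hi, rfl⟩ := hz
      rw [Multiset.mem_toFinset, Polynomial.mem_roots hQQne]
      exact hroots i hi
    have hinj : Set.InjOn (Nat.cast : ℕ → ZMod p) (range t : Finset ℕ) := by
      intro i hi j hj hij
      simp only [Finset.coe_range, Set.mem_Iio] at hi hj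
      have := congrArg ZMod.val hij
      rwa [ZMod.val_natCast_of_lt (lt_of_lt_of_le hi htp),
        ZMod.val_natCast_of_lt (lt_of_lt_of_le hj htp)] at this
    have hcard_img : ((range t).image (Nat.cast : ℕ → ZMod p)).card = t := by
      rw [Finset.card_image_of_injOn hinj, Finset.card_range]
    have hfinal : t ≤ T := by
      calc t = ((range t).image (Nat.cast : ℕ → ZMod p)).card := hcard_img.symm
        _ ≤ QQ.roots.toFinset.card := Finset.card_le_card hsubr
        _ ≤ Multiset.card QQ.roots := Multiset.toFinset_card_le _
        _ ≤ QQ.natDegree := QQ.card_roots'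
        _ ≤ T := hQQdeg
    omega
  · -- cardinality
    have hSc : (univ.filter (fun x : Fin n → ZMod p => f (e x) = c)).card
        = (univ.filter (fun v : (∀ k : Fin T, GaloisField p ((k : ℕ) + 1)) => f v = c)).card := by
      apply Finset.card_bij (fun x _ => e x)
      · intro x hx
        rw [Finset.mem_filter] at hx ⊢
        exact ⟨Finset.mem_univ _, hx.2⟩
      · intro x hx y hy hxy
        exact e.injective hxy
      · intro v hv
        refine ⟨e.symm v, ?_, e.apply_symm_apply v⟩
        rw [Finset.mem_filter] at hv ⊢
        refine ⟨Finset.mem_univ _, ?_⟩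
        rw [e.apply_symm_apply]
        exact hv.2
    rw [hSc]
    exact hc
end

section
/- Let q be a prime power and S a set of points of PG(n, q) such that every projective line meets S in at most t points. Embed PG(n, q) as a hyperplane H in PG(n+1, q), and let G be the bipartite incidence graph whose one part is the set of points of PG(n+1, q) \ H and whose other part is the set of lines of PG(n+1, q) meeting H in exactly one point of S, with incidence as adjacency. Then G has q^{n+1} point-vertices each of degree |S|, has |S|·q^n line-vertices each of degree q, and G contains no C_4 and no θ_{3,t} subgraph. -/
open Projectivization

/-- The bipartite incidence graph of a point–line incidence relation
(points on one side, lines on the other). -/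
def incidenceGraph (Pt Ln : Type*) (mem : Pt → Ln → Prop) : SimpleGraph (Pt ⊕ Ln) where
  Adj a b := ∃ p ℓ, mem p ℓ ∧
    ((a = Sum.inl p ∧ b = Sum.inr ℓ) ∨ (a = Sum.inr ℓ ∧ b = Sum.inl p))
  symm := ⟨by
    rintro a b ⟨p, ℓ, h, (⟨rfl, rfl⟩ | ⟨rfl, rfl⟩)⟩ <;> exact ⟨p, ℓ, h, by simp⟩⟩
  loopless := ⟨by
    rintro a ⟨p, ℓ, h, (⟨rfl, h2⟩ | ⟨rfl, h2⟩)⟩ <;> simp at h2⟩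

/-- The lines of `PG(n+1,q)` meeting the hyperplane at infinity `H ≅ PG(n,q)`
in exactly one point, that point belonging to `S`: equivalently, the affine
lines of `AG(n+1,q)` whose direction (a point of `PG(n,q)`) lies in `S`. -/
def linRepLines (K : Type*) [Field K] (n : ℕ)
    (S : Set (Projectivization K (Fin (n + 1) → K))) : Type _ :=
  {ℓ : Set (Fin (n + 1) → K) //
    ∃ (d : Fin (n + 1) → K) (hd : d ≠ 0) (b : Fin (n + 1) → K),
      Projectivization.mk K d hd ∈ S ∧ ℓ = {v | ∃ x : K, v = x • d + b}}

namespace Stmt19Aux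

variable {K : Type} [Field K] {n : ℕ}
  {S : Set (Projectivization K (Fin (n + 1) → K))}

/-- The affine line with direction `d` through `b`. -/
def lineSet (d b : Fin (n + 1) → K) : Set (Fin (n + 1) → K) :=
  {v | ∃ x : K, v = x • d + b}

lemma self_mem_lineSet (d b : Fin (n + 1) → K) : b ∈ lineSet d b :=
  ⟨0, by simp⟩

lemma lineSet_smul {c : K} (hc : c ≠ 0) (d b : Fin (n + 1) → K) :
    lineSet (c • d) b = lineSet d b := by
  ext v
  constructor
  · rintro ⟨x, rfl⟩; exact ⟨x * c, by rw [mul_smul]⟩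
  · rintro ⟨x, rfl⟩
    exact ⟨x * c⁻¹, by rw [smul_smul, mul_assoc, inv_mul_cancel₀ hc, mul_one]⟩

lemma lineSet_shift {d b p : Fin (n + 1) → K} (h : p ∈ lineSet d b) :
    lineSet d b = lineSet d p := by
  obtain ⟨x₀, rfl⟩ := h
  ext v
  constructor
  · rintro ⟨x, rfl⟩; exact ⟨x - x₀, by rw [sub_smul]; abel⟩
  · rintro ⟨x, rfl⟩; exact ⟨x + x₀, by rw [add_smul]; abel⟩

lemma diff_eq_smul {d b p₁ p₂ : Fin (n + 1) → K}
    (h₁ : p₁ ∈ lineSet d b) (h₂ : p₂ ∈ lineSet d b) :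
    ∃ x : K, p₂ - p₁ = x • d := by
  obtain ⟨x₁, rfl⟩ := h₁
  obtain ⟨x₂, rfl⟩ := h₂
  exact ⟨x₂ - x₁, by rw [sub_smul]; abel⟩

lemma diff_eq_smul_ne {d b p₁ p₂ : Fin (n + 1) → K}
    (h₁ : p₁ ∈ lineSet d b) (h₂ : p₂ ∈ lineSet d b) (hne : p₁ ≠ p₂) :
    ∃ x : K, x ≠ 0 ∧ p₂ - p₁ = x • d := by
  obtain ⟨x, hx⟩ := diff_eq_smul h₁ h₂
  refine ⟨x, fun h0 => hne ?_, hx⟩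
  subst h0
  simpa [sub_eq_zero, eq_comm] using hx

lemma lineSet_eq_of_pair {d b p₁ p₂ : Fin (n + 1) → K}
    (h₁ : p₁ ∈ lineSet d b) (h₂ : p₂ ∈ lineSet d b) (hne : p₁ ≠ p₂) :
    lineSet d b = lineSet (p₂ - p₁) p₁ := by
  obtain ⟨x, hx0, hx⟩ := diff_eq_smul_ne h₁ h₂ hne
  rw [lineSet_shift h₁, hx, lineSet_smul hx0]

lemma mk_smul_eq {c : K} (hc : c ≠ 0) {d : Fin (n + 1) → K} (hd : d ≠ 0)
    (hcd : c • d ≠ 0) :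
    Projectivization.mk K (c • d) hcd = Projectivization.mk K d hd :=
  (Projectivization.mk_eq_mk_iff K _ _ _ _).mpr ⟨Units.mk0 c hc, rfl⟩

/-- Any point of a line in the family gives a presentation based at that point. -/
lemma exists_dir (ℓ : linRepLines K n S) {p : Fin (n + 1) → K} (hp : p ∈ ℓ.1) :
    ∃ (d : Fin (n + 1) → K) (hd : d ≠ 0),
      Projectivization.mk K d hd ∈ S ∧ ℓ.1 = lineSet d p := by
  obtain ⟨d, hd, b, hdS, hset⟩ := ℓ.2
  have hp' : p ∈ lineSet d b := by
    show p ∈ {v | ∃ x : K, v = x • d + b}; rw [← hset]; exact hp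
  exact ⟨d, hd, hdS, hset.trans (lineSet_shift hp')⟩

/-- The direction of the segment between two points of a line lies in `S`. -/
lemma dir_mem (ℓ : linRepLines K n S) {p p' : Fin (n + 1) → K}
    (hp : p ∈ ℓ.1) (hp' : p' ∈ ℓ.1) (hne : p' - p ≠ 0) :
    Projectivization.mk K (p' - p) hne ∈ S := by
  obtain ⟨d, hd, hdS, hset⟩ := exists_dir ℓ hp
  rw [hset] at hp'
  obtain ⟨x, hx0, hx⟩ := diff_eq_smul_ne (self_mem_lineSet d p) hp'
    (fun h => hne (by rw [← h]; simp))
  have : Projectivization.mk K (p' - p) hne = Projectivization.mk K d hd := by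
    have := mk_smul_eq hx0 hd (hx ▸ hne)
    rw [← this]
    congr 1
  rw [this]; exact hdS

/-- Two distinct points lie on at most one line of the family. -/
lemma line_eq_of_two (ℓ ℓ' : linRepLines K n S) {p₁ p₂ : Fin (n + 1) → K}
    (h₁ : p₁ ∈ ℓ.1) (h₂ : p₂ ∈ ℓ.1) (h₁' : p₁ ∈ ℓ'.1) (h₂' : p₂ ∈ ℓ'.1)
    (hne : p₁ ≠ p₂) : ℓ = ℓ' := by
  obtain ⟨d, hd, _, hset⟩ := exists_dir ℓ h₁
  obtain ⟨d', hd', _, hset'⟩ := exists_dir ℓ' h₁'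
  apply Subtype.ext
  rw [hset, hset']
  rw [hset] at h₂; rw [hset'] at h₂'
  rw [lineSet_eq_of_pair (self_mem_lineSet d p₁) h₂ hne,
    lineSet_eq_of_pair (self_mem_lineSet d' p₁) h₂' hne]

/-- The line through `p` with direction `s ∈ S`. -/
def lineThrough (p : Fin (n + 1) → K) (s : Projectivization K (Fin (n + 1) → K))
    (hs : s ∈ S) : linRepLines K n S :=
  ⟨lineSet s.rep p, s.rep, s.rep_nonzero, p,
    by rw [Projectivization.mk_rep]; exact hs, rfl⟩

lemma mem_lineThrough (p : Fin (n + 1) → K) (s) (hs : s ∈ S) :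
    p ∈ (lineThrough p s hs).1 := self_mem_lineSet _ _

/-- The lines through a fixed point are in bijection with `S`. -/
noncomputable def equivLines (p : Fin (n + 1) → K) :
    ↥S ≃ {ℓ : linRepLines K n S // p ∈ ℓ.1} := by
  refine Equiv.ofBijective
    (fun s => ⟨lineThrough p s.1 s.2, mem_lineThrough p s.1 s.2⟩) ⟨?_, ?_⟩
  · rintro ⟨s, hs⟩ ⟨s', hs'⟩ h
    have hset : lineSet (Projectivization.rep s) p = lineSet (Projectivization.rep s') p := by
      have := congrArg (fun z => (z.1 : linRepLines K n S).1) h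
      simpa [lineThrough] using this
    have hmem : s'.rep + p ∈ lineSet s.rep p := by
      rw [hset]; exact ⟨1, by rw [one_smul]⟩
    obtain ⟨x, hx⟩ := hmem
    have hx' : s'.rep = x • s.rep := by
      have := hx; apply_fun (· - p) at this; simpa using this
    have hx0 : x ≠ 0 := by
      intro h0; apply s'.rep_nonzero; rw [hx', h0, zero_smul]
    apply Subtype.ext
    have hmk : Projectivization.mk K s'.rep s'.rep_nonzero
        = Projectivization.mk K s.rep s.rep_nonzero :=
      (Projectivization.mk_eq_mk_iff K _ _ _ _).mpr
        ⟨Units.mk0 x hx0, by rw [Units.smul_def]; exact hx'.symm⟩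
    rw [Projectivization.mk_rep, Projectivization.mk_rep] at hmk
    exact hmk.symm
  · rintro ⟨ℓ, hp⟩
    obtain ⟨d, hd, hdS, hset⟩ := exists_dir ℓ hp
    have hmkS : Projectivization.mk K d hd ∈ S := hdS
    refine ⟨⟨Projectivization.mk K d hd, hmkS⟩, ?_⟩
    apply Subtype.ext
    apply Subtype.ext
    show lineSet (Projectivization.rep (Projectivization.mk K d hd)) p = ℓ.1
    obtain ⟨a, ha⟩ := (Projectivization.mk_eq_mk_iff K _ _
      (Projectivization.rep_nonzero _) hd).mp (Projectivization.mk_rep _)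
    rw [← ha, Units.smul_def, lineSet_smul (Units.ne_zero a), hset]

/-- The points of a line are in bijection with `K`. -/
noncomputable def pointsEquiv (ℓ : linRepLines K n S) : K ≃ ℓ.1 := by
  have h := ℓ.2
  choose d hd b hdS hset using h
  refine Equiv.ofBijective (fun x => ⟨x • d + b, by rw [hset]; exact ⟨x, rfl⟩⟩) ⟨?_, ?_⟩
  · intro x y hxy
    have : x • d + b = y • d + b := congrArg Subtype.val hxy
    have h' : x • d = y • d := add_right_cancel this
    have h2 : (x - y) • d = 0 := by rw [sub_smul, h', sub_self]
    rcases smul_eq_zero.mp h2 with h | h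
    · exact sub_eq_zero.mp h
    · exact absurd h hd
  · rintro ⟨v, hv⟩
    rw [hset] at hv
    obtain ⟨x, rfl⟩ := hv
    exact ⟨x, rfl⟩

lemma adj_inl {Pt Ln : Type*} {mem : Pt → Ln → Prop} {p : Pt} {w : Pt ⊕ Ln} :
    (incidenceGraph Pt Ln mem).Adj (Sum.inl p) w ↔ ∃ ℓ, w = Sum.inr ℓ ∧ mem p ℓ := by
  constructor
  · rintro ⟨p', ℓ', h, ⟨hp, rfl⟩ | ⟨hp, hw⟩⟩
    · injection hp with h'; subst h'; exact ⟨ℓ', rfl, h⟩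
    · simp at hp
  · rintro ⟨ℓ, rfl, h⟩; exact ⟨p, ℓ, h, Or.inl ⟨rfl, rfl⟩⟩

lemma adj_inr {Pt Ln : Type*} {mem : Pt → Ln → Prop} {ℓ : Ln} {w : Pt ⊕ Ln} :
    (incidenceGraph Pt Ln mem).Adj (Sum.inr ℓ) w ↔ ∃ p, w = Sum.inl p ∧ mem p ℓ := by
  constructor
  · rintro ⟨p', ℓ', h, ⟨hp, hw⟩ | ⟨hp, rfl⟩⟩
    · simp at hp
    · injection hp with h'; subst h'; exact ⟨p', rfl, h⟩
  · rintro ⟨p, rfl, h⟩; exact ⟨p, ℓ, h, Or.inr ⟨rfl, rfl⟩⟩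

/-- The core geometric lemma behind `θ_{3,t}`-freeness. -/
lemma theta_core [Fintype K] {t : ℕ} (ht : 2 ≤ t)
    (hS : ∀ W : Submodule K (Fin (n + 1) → K), Module.finrank K W = 2 →
      Set.ncard {pt ∈ S | pt.submodule ≤ W} ≤ t)
    (p : Fin (n + 1) → K) (ℓ : linRepLines K n S)
    (P : Fin t → Fin (n + 1) → K) (L : Fin t → linRepLines K n S)
    (hPinj : Function.Injective P)
    (hPp : ∀ i, P i ≠ p) (hLl : ∀ i, L i ≠ ℓ)
    (h1 : ∀ i, p ∈ (L i).1) (h2 : ∀ i, P i ∈ (L i).1) (h3 : ∀ i, P i ∈ ℓ.1) :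
    False := by
  have t0 : (0 : ℕ) < t := lt_of_lt_of_le two_pos ht
  by_cases hpl : p ∈ ℓ.1
  · exact hLl ⟨0, t0⟩
      (line_eq_of_two _ _ (h1 _) (h2 _) hpl (h3 _) (Ne.symm (hPp _)))
  obtain ⟨d, hd, hdS, hset⟩ := exists_dir ℓ (h3 ⟨0, t0⟩)
  set p₀ := P ⟨0, t0⟩ with hp₀
  have hnotspan : ∀ (i : Fin t) (a : K), P i - p ≠ a • d := by
    intro i a ha
    apply hpl
    rw [hset]
    have hmem := h3 i
    rw [hset] at hmem
    obtain ⟨c, hc⟩ := hmem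
    have hp' : p = P i - a • d := by rw [← ha]; abel
    exact ⟨c - a, by rw [hp', hc, sub_smul]; abel⟩
  set e := p₀ - p with he
  have he0 : e ≠ 0 := sub_ne_zero.mpr (hPp _)
  have hind : LinearIndependent K ![d, e] :=
    (LinearIndependent.pair_iff' hd).mpr
      (fun a ha => hnotspan ⟨0, t0⟩ a (by rw [← hp₀] at *; rw [← he, ← ha]))
  set W : Submodule K (Fin (n + 1) → K) := Submodule.span K (Set.range ![d, e]) with hW
  have hrank : Module.finrank K W = 2 := by
    rw [hW, finrank_span_eq_card hind, Fintype.card_fin]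
  have hdW : d ∈ W := Submodule.subset_span ⟨0, rfl⟩
  have heW : e ∈ W := Submodule.subset_span ⟨1, rfl⟩
  have hPiW : ∀ i, P i - p ∈ W := by
    intro i
    have hmem := h3 i
    rw [hset] at hmem
    obtain ⟨c, hc⟩ := hmem
    have : P i - p = c • d + e := by rw [hc, he, hp₀]; abel
    rw [this]
    exact W.add_mem (W.smul_mem c hdW) heW
  have hPine : ∀ i, P i - p ≠ 0 := fun i => sub_ne_zero.mpr (hPp i)
  set f : Fin t → Projectivization K (Fin (n + 1) → K) :=
    fun i => Projectivization.mk K (P i - p) (hPine i) with hf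
  have hfS : ∀ i, f i ∈ S := fun i => dir_mem (L i) (h1 i) (h2 i) (hPine i)
  have hfinj : Function.Injective f := by
    intro i j hij
    obtain ⟨a, ha⟩ := (Projectivization.mk_eq_mk_iff K _ _ _ _).mp hij
    rw [Units.smul_def] at ha
    by_cases ha1 : (a : K) = 1
    · apply hPinj
      rw [ha1, one_smul] at ha
      have := sub_left_inj.mp ha
      exact this.symm
    · exfalso
      have hmi := h3 i; have hmj := h3 j
      rw [hset] at hmi hmj
      obtain ⟨c, hc⟩ := diff_eq_smul hmj hmi
      have key : ((a : K) - 1) • (P j - p) = c • d := by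
        rw [sub_smul, one_smul, ha, ← hc]; abel
      have : P j - p = (((a : K) - 1)⁻¹ * c) • d := by
        rw [mul_smul, ← key, smul_smul,
          inv_mul_cancel₀ (sub_ne_zero.mpr ha1), one_smul]
      exact hnotspan j _ this
  have hdnotmem : Projectivization.mk K d hd ∉ Set.range f := by
    rintro ⟨i, hi⟩
    obtain ⟨a, ha⟩ := (Projectivization.mk_eq_mk_iff K _ _ _ _).mp hi
    rw [Units.smul_def] at ha
    exact hnotspan i a ha.symm
  set T : Set (Projectivization K (Fin (n + 1) → K)) :=
    insert (Projectivization.mk K d hd) (Set.range f) with hT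
  have hTA : T ⊆ {pt ∈ S | pt.submodule ≤ W} := by
    rintro z (rfl | ⟨i, rfl⟩)
    · exact ⟨hdS, by
        rw [Projectivization.submodule_mk]
        exact (Submodule.span_singleton_le_iff_mem _ _).mpr hdW⟩
    · exact ⟨hfS i, by
        rw [hf, Projectivization.submodule_mk]
        exact (Submodule.span_singleton_le_iff_mem _ _).mpr (hPiW i)⟩
  haveI : Finite (Projectivization K (Fin (n + 1) → K)) := Quotient.finite _
  have hfin : {pt ∈ S | pt.submodule ≤ W}.Finite := Set.toFinite _
  have hcard : T.ncard = t + 1 := by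
    rw [hT, Set.ncard_insert_of_notMem hdnotmem (Set.finite_range f)]
    congr 1
    rw [← Nat.card_coe_set_eq, Nat.card_congr (Equiv.ofInjective f hfinj).symm,
      Nat.card_eq_fintype_card, Fintype.card_fin]
  have hle := Set.ncard_le_ncard hTA hfin
  have := hS W hrank
  omega

end Stmt19Aux


open Stmt19Aux in
/-- Let `S` be a set of points of `PG(n,q)` such that every
projective line meets `S` in at most `t` points.  Embedding `PG(n,q)` as the
hyperplane at infinity `H` of `PG(n+1,q)`, the points of `PG(n+1,q) ∖ H` are
the points of `AG(n+1,q) = F_q^{n+1}`.  The linear-representation incidence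
graph `G` (points of `PG(n+1,q) ∖ H` versus lines meeting `H` in exactly one
point of `S`) has `q^{n+1}` point-vertices each of degree `|S|`, has
`|S|·q^n` line-vertices each of degree `q`, and contains no `C₄` and no
`θ_{3,t}`. -/
theorem stmt19 (q n t : ℕ) (hq : IsPrimePow q) (ht : 2 ≤ t)
    (K : Type) [Field K] [Fintype K] (hK : Fintype.card K = q)
    (S : Set (Projectivization K (Fin (n + 1) → K)))
    (hS : ∀ W : Submodule K (Fin (n + 1) → K), Module.finrank K W = 2 →
      Set.ncard {p ∈ S | p.submodule ≤ W} ≤ t)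
    (G : SimpleGraph ((Fin (n + 1) → K) ⊕ linRepLines K n S))
    (hG : G = incidenceGraph _ _ (fun p ℓ => p ∈ ℓ.1)) :
    (Nat.card (Fin (n + 1) → K) = q ^ (n + 1)) ∧
    (∀ p : Fin (n + 1) → K, (G.neighborSet (Sum.inl p)).ncard = S.ncard) ∧
    (Nat.card (linRepLines K n S) = S.ncard * q ^ n) ∧
    (∀ ℓ : linRepLines K n S, (G.neighborSet (Sum.inr ℓ)).ncard = q) ∧
    C4Free G ∧ Theta3Free G t := by
  subst hG
  have hq0 : 0 < q := hq.pos
  have hcardK : Nat.card K = q := by rw [Nat.card_eq_fintype_card, hK]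
  refine ⟨?_, ?_, ?_, ?_, ?_, ?_⟩
  · rw [Nat.card_eq_fintype_card, Fintype.card_fun, hK, Fintype.card_fin]
  · -- point degrees
    intro p
    have hnb : (incidenceGraph _ _ (fun p ℓ => p ∈ ℓ.1)).neighborSet (Sum.inl p)
        = Sum.inr '' {ℓ : linRepLines K n S | p ∈ ℓ.1} := by
      ext w
      simp only [SimpleGraph.mem_neighborSet, adj_inl, Set.mem_image, Set.mem_setOf_eq]
      constructor
      · rintro ⟨ℓ, rfl, h⟩; exact ⟨ℓ, h, rfl⟩
      · rintro ⟨ℓ, h, rfl⟩; exact ⟨ℓ, rfl, h⟩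
    rw [hnb, Set.ncard_image_of_injective _ Sum.inr_injective,
      ← Nat.card_coe_set_eq, ← Nat.card_coe_set_eq]
    exact Nat.card_congr (equivLines (S := S) p).symm
  · -- number of lines
    have eA : ((Fin (n + 1) → K) × ↥S)
        ≃ {pl : (Fin (n + 1) → K) × linRepLines K n S // pl.1 ∈ pl.2.1} := by
      refine Equiv.ofBijective
        (fun ps => ⟨(ps.1, ((equivLines ps.1) ps.2).1), ((equivLines ps.1) ps.2).2⟩)
        ⟨?_, ?_⟩
      · rintro ⟨p, s⟩ ⟨p', s'⟩ h
        have h1 : p = p' := congrArg (fun z => z.1.1) h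
        subst h1
        have h2 : ((equivLines p) s).1 = ((equivLines p) s').1 :=
          congrArg (fun z => z.1.2) h
        have h3 : (equivLines p) s = (equivLines p) s' := Subtype.ext h2
        rw [(equivLines p).injective h3]
      · rintro ⟨⟨p, ℓ⟩, hp⟩
        refine ⟨⟨p, (equivLines p).symm ⟨ℓ, hp⟩⟩, ?_⟩
        apply Subtype.ext
        show (p, ((equivLines p) ((equivLines p).symm ⟨ℓ, hp⟩)).1) = (p, ℓ)
        rw [Equiv.apply_symm_apply]
    have eB : (linRepLines K n S × K)
        ≃ {pl : (Fin (n + 1) → K) × linRepLines K n S // pl.1 ∈ pl.2.1} := by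
      refine Equiv.ofBijective
        (fun lx => ⟨((pointsEquiv lx.1 lx.2 : Fin (n + 1) → K), lx.1),
          (pointsEquiv lx.1 lx.2).2⟩) ⟨?_, ?_⟩
      · rintro ⟨ℓ, x⟩ ⟨ℓ', x'⟩ h
        have h1 : ℓ = ℓ' := congrArg (fun z => z.1.2) h
        subst h1
        have h2 : (pointsEquiv ℓ x : Fin (n + 1) → K) = pointsEquiv ℓ x' :=
          congrArg (fun z => z.1.1) h
        rw [(pointsEquiv ℓ).injective (Subtype.ext h2)]
      · rintro ⟨⟨p, ℓ⟩, hp⟩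
        refine ⟨⟨ℓ, (pointsEquiv ℓ).symm ⟨p, hp⟩⟩, ?_⟩
        apply Subtype.ext
        show ((((pointsEquiv ℓ) ((pointsEquiv ℓ).symm ⟨p, hp⟩)) : Fin (n + 1) → K), ℓ)
          = (p, ℓ)
        rw [Equiv.apply_symm_apply]
    have key : Nat.card (Fin (n + 1) → K) * Nat.card ↥S
        = Nat.card (linRepLines K n S) * Nat.card K := by
      rw [← Nat.card_prod, Nat.card_congr eA, ← Nat.card_congr eB, Nat.card_prod]
    rw [Nat.card_eq_fintype_card, Fintype.card_fun, hK, Fintype.card_fin, hcardK,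
      Nat.card_coe_set_eq] at key
    have : Nat.card (linRepLines K n S) * q = (S.ncard * q ^ n) * q := by
      rw [← key, pow_succ]; ring
    exact Nat.eq_of_mul_eq_mul_right hq0 this
  · -- line degrees
    intro ℓ
    have hnb : (incidenceGraph _ _ (fun p ℓ => p ∈ ℓ.1)).neighborSet (Sum.inr ℓ)
        = Sum.inl '' ℓ.1 := by
      ext w
      simp only [SimpleGraph.mem_neighborSet, adj_inr, Set.mem_image]
      constructor
      · rintro ⟨p, rfl, h⟩; exact ⟨p, h, rfl⟩
      · rintro ⟨p, h, rfl⟩; exact ⟨p, rfl, h⟩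
    rw [hnb, Set.ncard_image_of_injective _ Sum.inl_injective,
      ← Nat.card_coe_set_eq, Nat.card_congr (pointsEquiv ℓ).symm, hcardK]
  · -- C4-free
    rintro ⟨a, b, c, dd, hab, hac, had, hbc, hbd, hcd, h1, h2, h3, h4⟩
    match a with
    | Sum.inl p₁ =>
      obtain ⟨ℓ₁, rfl, m1⟩ := adj_inl.mp h1
      obtain ⟨p₂, rfl, m2⟩ := adj_inr.mp h2
      obtain ⟨ℓ₂, rfl, m3⟩ := adj_inl.mp h3
      obtain ⟨p₁', hp₁', m4⟩ := adj_inr.mp h4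
      rw [Sum.inl.injEq] at hp₁'
      subst hp₁'
      exact hbd (congrArg Sum.inr
        (line_eq_of_two ℓ₁ ℓ₂ m1 m2 m4 m3 (fun h => hac (congrArg Sum.inl h)))) |>.elim
    | Sum.inr ℓ₁ =>
      obtain ⟨p₁, rfl, m1⟩ := adj_inr.mp h1
      obtain ⟨ℓ₂, rfl, m2⟩ := adj_inl.mp h2
      obtain ⟨p₂, rfl, m3⟩ := adj_inr.mp h3
      obtain ⟨ℓ₁', hℓ₁', m4⟩ := adj_inl.mp h4
      rw [Sum.inr.injEq] at hℓ₁'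
      subst hℓ₁'
      exact hac (congrArg Sum.inr
        (line_eq_of_two ℓ₁ ℓ₂ m1 m4 m2 m3 (fun h => hbd (congrArg Sum.inl h)))) |>.elim
  · -- theta-free
    rintro ⟨u, v, x, y, huv, hxinj, hyinj, hxy, hspec, hadj⟩
    match u with
    | Sum.inl p =>
      choose L hxL hpL using fun i => adj_inl.mp (hadj i).1
      choose P hyP hPL using fun i => adj_inr.mp (by rw [← hxL i]; exact (hadj i).2.1)
      obtain ⟨ℓ, hv, _⟩ := adj_inl.mp (by rw [← hyP ⟨0, by omega⟩]; exact (hadj _).2.2)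
      have h3 : ∀ i, P i ∈ ℓ.1 := by
        intro i
        obtain ⟨ℓi, hvi, hm⟩ := adj_inl.mp (by rw [← hyP i]; exact (hadj i).2.2)
        rw [hv] at hvi
        rw [Sum.inr.injEq] at hvi
        rwa [hvi]
      refine theta_core ht hS p ℓ P L ?_ ?_ ?_ hpL hPL h3
      · intro i j hij
        apply hyinj
        rw [hyP i, hyP j, hij]
      · intro i hip
        exact (hspec i).2.2.1 (by rw [hyP i, hip])
      · intro i hil
        exact (hspec i).2.1 (by rw [hxL i, hil, ← hv])
    | Sum.inr ℓ =>
      choose P hxP hPl using fun i => adj_inr.mp (hadj i).1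
      choose L hyL hPL using fun i => adj_inl.mp (by rw [← hxP i]; exact (hadj i).2.1)
      obtain ⟨p, hv, _⟩ := adj_inr.mp (by rw [← hyL ⟨0, by omega⟩]; exact (hadj _).2.2)
      have h1 : ∀ i, p ∈ (L i).1 := by
        intro i
        obtain ⟨pi, hvi, hm⟩ := adj_inr.mp (by rw [← hyL i]; exact (hadj i).2.2)
        rw [hv] at hvi
        rw [Sum.inl.injEq] at hvi
        rwa [hvi]
      refine theta_core ht hS p ℓ P L ?_ ?_ ?_ h1 hPL hPl
      · intro i j hij
        apply hxinj
        rw [hxP i, hxP j, hij]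
      · intro i hip
        exact (hspec i).2.1 (by rw [hxP i, hip, hv])
      · intro i hil
        exact (hspec i).2.2.1 (by rw [hyL i, hil])
end
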